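/- arXiv:1010.1857 — 6 statements merged into one kernel-verified Lean document; each statement's English description precedes it below -/
import Mathlib

section
/- Suppose K satisfies K(x,y) ≤ K₀(x^α y^β + x^β y^α) with 0 < α ≤ β < 1/2 and α + β = 2λ < 1. Then the integral ∫₀¹ s^{-2λ} ∫_{1-s}^∞ K(s,t) t^{-(1+2λ)} dt ds is finite and strictly positive, so the constant h_λ defined as its reciprocal is a well-defined positive real number. -/
open MeasureTheory Real Set

/-!
The growth bound splits the inner integrand into `K₀ s^α t^{-(1+α)} + K₀ s^β t^{-(1+β)}`,
whose tail integral over `(1-s, ∞)` is `K₀ s^α (1-s)^{-α}/α + K₀ s^β (1-s)^{-β}/β`.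
After multiplying by `s^{-2λ}` this is a sum of beta densities `s^{-β}(1-s)^{-α}` and
`s^{-α}(1-s)^{-β}`, integrable on `(0,1)` because `α, β < 1`. Positivity comes from the
lower bound `K ≥ k₀` on the square `[1/2,1]²`, which lies inside the domain of integration.
-/

theorem integrableOn_Ioo_rpow_mul_one_sub_rpow {p q : ℝ} (hp : -1 < p) (hq : -1 < q) :
    IntegrableOn (fun s : ℝ => s ^ p * (1 - s) ^ q) (Ioo 0 1) := by
  have hleft : IntervalIntegrable (fun s : ℝ => s ^ p * (1 - s) ^ q) volume 0 (1 / 2) := by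
    refine (intervalIntegral.intervalIntegrable_rpow' hp).mul_continuousOn
      (ContinuousOn.rpow_const (by fun_prop) fun s hs => Or.inl ?_)
    rw [uIcc_of_le (by norm_num)] at hs
    linarith [hs.2]
  have hright : IntervalIntegrable (fun s : ℝ => s ^ p * (1 - s) ^ q) volume (1 / 2) 1 := by
    have h := (intervalIntegral.intervalIntegrable_rpow' hq (a := 1 / 2) (b := 0)).comp_sub_left 1
    rw [show (1 : ℝ) - 1 / 2 = 1 / 2 by norm_num, sub_zero] at h
    refine h.continuousOn_mul (ContinuousOn.rpow_const continuousOn_id fun s hs => Or.inl ?_)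
    rw [uIcc_of_le (by norm_num)] at hs
    exact (lt_of_lt_of_le (by norm_num) hs.1).ne'
  exact (intervalIntegrable_iff_integrableOn_Ioo_of_le zero_le_one).1 (hleft.trans hright)

theorem integral_Ioi_rpow_neg_one_sub {a c : ℝ} (ha : 0 < a) (hc : 0 < c) :
    ∫ t in Ioi c, t ^ (-(1 + a)) = c ^ (-a) / a := by
  rw [integral_Ioi_rpow_of_lt (by linarith) hc, show -(1 + a) + 1 = -a by ring, neg_div_neg_eq]

theorem stronglyMeasurable_setIntegral_Ioi {F : ℝ → ℝ → ℝ} {g : ℝ → ℝ}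
    (hF : Measurable (Function.uncurry F)) (hg : Measurable g) :
    StronglyMeasurable fun s => ∫ t in Ioi (g s), F s t := by
  have hind : Measurable fun p : ℝ × ℝ => (Ioi (g p.1)).indicator (F p.1) p.2 :=
    Measurable.ite (measurableSet_lt (hg.comp measurable_fst) measurable_snd) hF measurable_const
  simpa only [integral_indicator measurableSet_Ioi] using
    hind.stronglyMeasurable.integral_prod_right' (ν := volume)

theorem mul_measureReal_le_setIntegral {X : Type*} [MeasurableSpace X] {μ : Measure X}
    {f : X → ℝ} {S T : Set X} {k : ℝ} (hT : MeasurableSet T) (hμT : μ T ≠ ⊤) (hTS : T ⊆ S)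
    (hf : IntegrableOn f S μ) (hf0 : 0 ≤ᵐ[μ.restrict S] f) (hk : ∀ x ∈ T, k ≤ f x) :
    k * μ.real T ≤ ∫ x in S, f x ∂μ :=
  (setIntegral_ge_of_const_le_real hT hμT hk (hf.mono_set hTS)).trans
    (setIntegral_mono_set hf hf0 hTS.eventuallyLE)

section Majorant

variable {K₀ α β : ℝ}

theorem integrableOn_Ioi_majorant (hα : 0 < α) (hβ : 0 < β) (s : ℝ) {c : ℝ} (hc : 0 < c) :
    IntegrableOn (fun t => K₀ * s ^ α * t ^ (-(1 + α)) + K₀ * s ^ β * t ^ (-(1 + β))) (Ioi c) :=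
  ((integrableOn_Ioi_rpow_of_lt (by linarith) hc).const_mul _).add
    ((integrableOn_Ioi_rpow_of_lt (by linarith) hc).const_mul _)

theorem integral_Ioi_majorant (hα : 0 < α) (hβ : 0 < β) (s : ℝ) {c : ℝ} (hc : 0 < c) :
    ∫ t in Ioi c, (K₀ * s ^ α * t ^ (-(1 + α)) + K₀ * s ^ β * t ^ (-(1 + β))) =
      K₀ * s ^ α * (c ^ (-α) / α) + K₀ * s ^ β * (c ^ (-β) / β) := by
  rw [integral_add ((integrableOn_Ioi_rpow_of_lt (by linarith) hc).const_mul _)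
    ((integrableOn_Ioi_rpow_of_lt (by linarith) hc).const_mul _), integral_const_mul,
    integral_const_mul, integral_Ioi_rpow_neg_one_sub hα hc, integral_Ioi_rpow_neg_one_sub hβ hc]

end Majorant

section Kernel

variable {K : ℝ → ℝ → ℝ} {K₀ α β lam : ℝ}

theorem kernel_mul_rpow_nonneg (hnonneg : ∀ x y : ℝ, 0 < x → 0 < y → 0 ≤ K x y)
    {s t : ℝ} (hs : 0 < s) (ht : 0 < t) : 0 ≤ K s t * t ^ (-(1 + 2 * lam)) :=
  mul_nonneg (hnonneg s t hs ht) (rpow_nonneg ht.le _)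

theorem kernel_mul_rpow_le (hsum : α + β = 2 * lam)
    (hup : ∀ x y : ℝ, 0 < x → 0 < y → K x y ≤ K₀ * (x ^ α * y ^ β + x ^ β * y ^ α))
    {s t : ℝ} (hs : 0 < s) (ht : 0 < t) :
    K s t * t ^ (-(1 + 2 * lam)) ≤ K₀ * s ^ α * t ^ (-(1 + α)) + K₀ * s ^ β * t ^ (-(1 + β)) :=
  calc K s t * t ^ (-(1 + 2 * lam))
      ≤ K₀ * (s ^ α * t ^ β + s ^ β * t ^ α) * t ^ (-(1 + 2 * lam)) := by
        gcongr
        exact hup s t hs ht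
    _ = K₀ * s ^ α * t ^ (-(1 + α)) + K₀ * s ^ β * t ^ (-(1 + β)) := by
        rw [show -(1 + α) = β + -(1 + 2 * lam) by linarith,
          show -(1 + β) = α + -(1 + 2 * lam) by linarith, rpow_add ht, rpow_add ht]
        ring

theorem integrableOn_Ioi_kernel_mul_rpow (hα : 0 < α) (hβ : 0 < β) (hsum : α + β = 2 * lam)
    (hmeas : Measurable (Function.uncurry K))
    (hnonneg : ∀ x y : ℝ, 0 < x → 0 < y → 0 ≤ K x y)
    (hup : ∀ x y : ℝ, 0 < x → 0 < y → K x y ≤ K₀ * (x ^ α * y ^ β + x ^ β * y ^ α))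
    {s c : ℝ} (hs : 0 < s) (hc : 0 < c) :
    IntegrableOn (fun t => K s t * t ^ (-(1 + 2 * lam))) (Ioi c) := by
  refine (integrableOn_Ioi_majorant (K₀ := K₀) hα hβ s hc).mono'
    ((hmeas.comp measurable_prodMk_left).mul (by fun_prop)).aestronglyMeasurable
    (ae_restrict_of_forall_mem measurableSet_Ioi fun t ht => ?_)
  have ht0 : 0 < t := hc.trans ht
  rw [norm_of_nonneg (kernel_mul_rpow_nonneg hnonneg hs ht0)]
  exact kernel_mul_rpow_le hsum hup hs ht0

theorem setIntegral_Ioi_kernel_mul_rpow_le (hα : 0 < α) (hβ : 0 < β) (hsum : α + β = 2 * lam)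
    (hmeas : Measurable (Function.uncurry K))
    (hnonneg : ∀ x y : ℝ, 0 < x → 0 < y → 0 ≤ K x y)
    (hup : ∀ x y : ℝ, 0 < x → 0 < y → K x y ≤ K₀ * (x ^ α * y ^ β + x ^ β * y ^ α))
    {s c : ℝ} (hs : 0 < s) (hc : 0 < c) :
    ∫ t in Ioi c, K s t * t ^ (-(1 + 2 * lam)) ≤
      K₀ * s ^ α * (c ^ (-α) / α) + K₀ * s ^ β * (c ^ (-β) / β) := by
  rw [← integral_Ioi_majorant hα hβ s hc]
  exact setIntegral_mono_on (integrableOn_Ioi_kernel_mul_rpow hα hβ hsum hmeas hnonneg hup hs hc)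
    (integrableOn_Ioi_majorant hα hβ s hc) measurableSet_Ioi
    fun t ht => kernel_mul_rpow_le hsum hup hs (hc.trans ht)

theorem setIntegral_Ioi_kernel_mul_rpow_nonneg
    (hnonneg : ∀ x y : ℝ, 0 < x → 0 < y → 0 ≤ K x y) {s c : ℝ} (hs : 0 < s) (hc : 0 ≤ c) :
    0 ≤ ∫ t in Ioi c, K s t * t ^ (-(1 + 2 * lam)) :=
  setIntegral_nonneg measurableSet_Ioi fun _ ht =>
    kernel_mul_rpow_nonneg hnonneg hs (hc.trans_lt ht)

theorem integrableOn_Ioo_rpow_mul_setIntegral_Ioi_kernel (hα : 0 < α) (hβ : 0 < β)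
    (hα1 : α < 1) (hβ1 : β < 1) (hsum : α + β = 2 * lam)
    (hmeas : Measurable (Function.uncurry K))
    (hnonneg : ∀ x y : ℝ, 0 < x → 0 < y → 0 ≤ K x y)
    (hup : ∀ x y : ℝ, 0 < x → 0 < y → K x y ≤ K₀ * (x ^ α * y ^ β + x ^ β * y ^ α)) :
    IntegrableOn (fun s => s ^ (-(2 * lam)) * ∫ t in Ioi (1 - s), K s t * t ^ (-(1 + 2 * lam)))
      (Ioo 0 1) := by
  have hbeta :=
    ((integrableOn_Ioo_rpow_mul_one_sub_rpow (p := -β) (q := -α) (by linarith)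
        (by linarith)).const_mul (K₀ / α)).add
      ((integrableOn_Ioo_rpow_mul_one_sub_rpow (p := -α) (q := -β) (by linarith)
        (by linarith)).const_mul (K₀ / β))
  have hF : Measurable (Function.uncurry fun s t : ℝ => K s t * t ^ (-(1 + 2 * lam))) :=
    hmeas.mul (measurable_snd.pow_const _)
  have hmeas_outer : StronglyMeasurable fun s : ℝ =>
      s ^ (-(2 * lam)) * ∫ t in Ioi (1 - s), K s t * t ^ (-(1 + 2 * lam)) :=
    (measurable_id.pow_const _).stronglyMeasurable.mul
      (stronglyMeasurable_setIntegral_Ioi hF (measurable_const.sub measurable_id))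
  refine hbeta.mono' hmeas_outer.aestronglyMeasurable
    (ae_restrict_of_forall_mem measurableSet_Ioo fun s hs => ?_)
  have hs0 : 0 < s := hs.1
  have hc : 0 < 1 - s := by linarith [hs.2]
  rw [norm_of_nonneg (mul_nonneg (rpow_nonneg hs0.le _)
    (setIntegral_Ioi_kernel_mul_rpow_nonneg hnonneg hs0 hc.le))]
  calc s ^ (-(2 * lam)) * ∫ t in Ioi (1 - s), K s t * t ^ (-(1 + 2 * lam))
      ≤ s ^ (-(2 * lam)) *
          (K₀ * s ^ α * ((1 - s) ^ (-α) / α) + K₀ * s ^ β * ((1 - s) ^ (-β) / β)) := by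
        gcongr
        exact setIntegral_Ioi_kernel_mul_rpow_le hα hβ hsum hmeas hnonneg hup hs0 hc
    _ = K₀ / α * (s ^ (-β) * (1 - s) ^ (-α)) + K₀ / β * (s ^ (-α) * (1 - s) ^ (-β)) := by
        rw [show -β = -(2 * lam) + α by linarith, show -α = -(2 * lam) + β by linarith,
          rpow_add hs0, rpow_add hs0]
        ring

theorem div_two_le_rpow_mul_setIntegral_Ioi_kernel {k₀ : ℝ} (hlam : 0 ≤ lam)
    (hnonneg : ∀ x y : ℝ, 0 < x → 0 < y → 0 ≤ K x y)
    (hlow : ∀ x y : ℝ, x ∈ Icc (1 / 4 : ℝ) 1 → y ∈ Icc (1 / 4 : ℝ) 1 → k₀ ≤ K x y)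
    {s : ℝ} (hs : s ∈ Ioo (1 / 2 : ℝ) 1)
    (hint : IntegrableOn (fun t => K s t * t ^ (-(1 + 2 * lam))) (Ioi (1 - s))) :
    k₀ / 2 ≤ s ^ (-(2 * lam)) * ∫ t in Ioi (1 - s), K s t * t ^ (-(1 + 2 * lam)) := by
  have hsub : Icc (1 / 2 : ℝ) 1 ⊆ Ioi (1 - s) := fun t ht => by
    simp only [mem_Ioi]; linarith [ht.1, hs.1]
  have hnn : 0 ≤ᵐ[volume.restrict (Ioi (1 - s))] fun t => K s t * t ^ (-(1 + 2 * lam)) :=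
    ae_restrict_of_forall_mem measurableSet_Ioi fun t ht =>
      kernel_mul_rpow_nonneg hnonneg (by linarith [hs.1]) (lt_trans (by linarith [hs.2]) ht)
  have hbound : ∀ t ∈ Icc (1 / 2 : ℝ) 1, k₀ ≤ K s t * t ^ (-(1 + 2 * lam)) := fun t ht => by
    have hK := hlow s t ⟨by linarith [hs.1], hs.2.le⟩ ⟨by linarith [ht.1], ht.2⟩
    have hK0 := hnonneg s t (by linarith [hs.1]) (by linarith [ht.1])
    have hpow : 1 ≤ t ^ (-(1 + 2 * lam)) :=
      one_le_rpow_of_pos_of_le_one_of_nonpos (by linarith [ht.1]) ht.2 (by linarith)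
    nlinarith
  have hinner := mul_measureReal_le_setIntegral measurableSet_Icc measure_Icc_lt_top.ne hsub
    hint hnn hbound
  rw [Real.volume_real_Icc_of_le (by norm_num)] at hinner
  have hpow : 1 ≤ s ^ (-(2 * lam)) :=
    one_le_rpow_of_pos_of_le_one_of_nonpos (by linarith [hs.1]) hs.2.le (by linarith)
  have hI0 : 0 ≤ ∫ t in Ioi (1 - s), K s t * t ^ (-(1 + 2 * lam)) :=
    setIntegral_Ioi_kernel_mul_rpow_nonneg hnonneg (by linarith [hs.1]) (by linarith [hs.2])
  nlinarith [mul_le_mul_of_nonneg_right hpow hI0]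

end Kernel

theorem hlambda_well_defined_general
    (K : ℝ → ℝ → ℝ) (K₀ k₀ α β lam : ℝ)
    (hk₀ : 0 < k₀)
    (hα : 0 < α) (hαβ : α ≤ β) (hβ : β < 1/2)
    (hsum : α + β = 2*lam)
    (hmeas : Measurable (Function.uncurry K))
    (hnonneg : ∀ x y : ℝ, 0 < x → 0 < y → 0 ≤ K x y)
    (hup : ∀ x y : ℝ, 0 < x → 0 < y → K x y ≤ K₀ * (x ^ α * y ^ β + x ^ β * y ^ α))
    (hlow : ∀ x y : ℝ, x ∈ Set.Icc (1/4 : ℝ) 1 → y ∈ Set.Icc (1/4 : ℝ) 1 → k₀ ≤ K x y) :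
    (∀ s ∈ Set.Ioo (0:ℝ) 1,
        IntegrableOn (fun t => K s t * t ^ (-(1+2*lam))) (Set.Ioi (1-s)))
    ∧ IntegrableOn
        (fun s => s ^ (-(2*lam)) * ∫ t in Set.Ioi (1-s), K s t * t ^ (-(1+2*lam)))
        (Set.Ioo (0:ℝ) 1)
    ∧ 0 < ∫ s in Set.Ioo (0:ℝ) 1,
        s ^ (-(2*lam)) * ∫ t in Set.Ioi (1-s), K s t * t ^ (-(1+2*lam)) := by
  have hβ0 : 0 < β := hα.trans_le hαβ
  have hinner : ∀ s ∈ Ioo (0 : ℝ) 1,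
      IntegrableOn (fun t => K s t * t ^ (-(1 + 2 * lam))) (Ioi (1 - s)) := fun s hs =>
    integrableOn_Ioi_kernel_mul_rpow hα hβ0 hsum hmeas hnonneg hup hs.1 (by linarith [hs.2])
  have houter := integrableOn_Ioo_rpow_mul_setIntegral_Ioi_kernel hα hβ0 (by linarith)
    (by linarith) hsum hmeas hnonneg hup
  refine ⟨hinner, houter, ?_⟩
  have hnn : 0 ≤ᵐ[volume.restrict (Ioo (0 : ℝ) 1)]
      fun s => s ^ (-(2 * lam)) * ∫ t in Ioi (1 - s), K s t * t ^ (-(1 + 2 * lam)) :=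
    ae_restrict_of_forall_mem measurableSet_Ioo fun s hs => mul_nonneg (rpow_nonneg hs.1.le _)
      (setIntegral_Ioi_kernel_mul_rpow_nonneg hnonneg hs.1 (by linarith [hs.2]))
  have h := mul_measureReal_le_setIntegral measurableSet_Ioo measure_Ioo_lt_top.ne
    (Ioo_subset_Ioo_left (by norm_num)) houter hnn fun s hs =>
      div_two_le_rpow_mul_setIntegral_Ioi_kernel (by linarith) hnonneg hlow hs
        (hinner s ⟨by linarith [hs.1], hs.2⟩)
  rw [Real.volume_real_Ioo_of_le (by norm_num)] at h
  linarith

/-- the integral defining `h_λ⁻¹` is finite and strictly positive. -/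
theorem hlambda_well_defined
    (K : ℝ → ℝ → ℝ) (K₀ k₀ α β lam : ℝ)
    (hK₀ : 0 < K₀) (hk₀ : 0 < k₀)
    (hα : 0 < α) (hαβ : α ≤ β) (hβ : β < 1/2)
    (hsum : α + β = 2*lam)
    (hmeas : Measurable (Function.uncurry K))
    (hnonneg : ∀ x y : ℝ, 0 < x → 0 < y → 0 ≤ K x y)
    (hsymm : ∀ x y : ℝ, K x y = K y x)
    (hup : ∀ x y : ℝ, 0 < x → 0 < y → K x y ≤ K₀ * (x ^ α * y ^ β + x ^ β * y ^ α))
    (hlow : ∀ x y : ℝ, x ∈ Set.Icc (1/4 : ℝ) 1 → y ∈ Set.Icc (1/4 : ℝ) 1 → k₀ ≤ K x y) :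
    (∀ s ∈ Set.Ioo (0:ℝ) 1,
        IntegrableOn (fun t => K s t * t ^ (-(1+2*lam))) (Set.Ioi (1-s)))
    ∧ IntegrableOn
        (fun s => s ^ (-(2*lam)) * ∫ t in Set.Ioi (1-s), K s t * t ^ (-(1+2*lam)))
        (Set.Ioo (0:ℝ) 1)
    ∧ 0 < ∫ s in Set.Ioo (0:ℝ) 1,
        s ^ (-(2*lam)) * ∫ t in Set.Ioi (1-s), K s t * t ^ (-(1+2*lam)) :=
  hlambda_well_defined_general K K₀ k₀ α β lam hk₀ hα hαβ hβ hsum hmeas hnonneg hup hlow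
end

section
/- Let h: (0,∞) → [0,∞) be measurable and satisfy h(x) = h_λ x^{2λ-1} ∫₀^x y^{-2λ} h(y) ∫_{x-y}^∞ K(y,z) z^{-(1+2λ)} h(z) dz dy for a.e. x > 0. Then there exists a constant C depending only on λ, α, k₀ such that for every R > 0, the average (2/R) ∫_{R/2}^R h(x) dx ≤ C. -/
/-!
On the window `(x/2, x)` homogeneity and the lower bound on `[1/4, 1]²` give
`K y z ≥ k₀ x^{2λ}`, so restricting both integrals of the equation to that window yields the
Riccati-type inequality `h x ≥ (h_λ k₀ / x²) (∫_{x/2}^x h)²`. For `a ≤ t < x < c < 2a` the window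
of `x` contains `(a, t)`, so `u t = ∫_a^t h` obeys the blow-up inequality
`u' ≥ (h_λ k₀ / c²) u²` on `(a, c)`. Run along the points `t_n = c - (c - b) / 2ⁿ` for
`a ≤ b < c`, this forces
`u b ≤ 4 c² / (h_λ k₀ (c - b))`, because `u` stays finite below `2a`: a point whose window
integral is infinite would have `h x = ∞`.
-/

open MeasureTheory Real Set
open scoped ENNReal

theorem ENNReal.mul_le_two_of_div_pow_mul_sq_le {u : ℕ → ℝ≥0∞} {q T : ℝ≥0∞} (hT : T ≠ ∞)
    (hbdd : ∀ n, u n ≤ T) (hrec : ∀ n, q / 2 ^ n * u n ^ 2 ≤ u (n + 1)) : q * u 0 ≤ 2 := by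
  by_contra! hlt
  have hgrowth : ∀ n, 2 ^ n * u 0 ≤ u n := by
    intro n
    induction n with
    | zero => simp
    | succ n ih =>
      have hpow : (2 : ℝ≥0∞) ^ n ≠ 0 := pow_ne_zero _ two_ne_zero
      calc 2 ^ (n + 1) * u 0 = 2 * (2 ^ n * u 0) := by ring
        _ ≤ q * u 0 * (2 ^ n * u 0) := by gcongr
        _ = q / 2 ^ n * 2 ^ n * (2 ^ n * u 0) * u 0 := by
          rw [ENNReal.div_mul_cancel hpow (ENNReal.pow_ne_top ENNReal.ofNat_ne_top)]; ring
        _ = q / 2 ^ n * (2 ^ n * u 0) ^ 2 := by ring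
        _ ≤ q / 2 ^ n * u n ^ 2 := by gcongr
        _ ≤ u (n + 1) := hrec n
  have hu0 : u 0 = 0 := by
    by_contra hne
    obtain ⟨n, hn⟩ := ENNReal.exists_nat_gt (ENNReal.div_ne_top hT hne)
    have hn2 : (n : ℝ≥0∞) ≤ 2 ^ n := by exact_mod_cast Nat.lt_two_pow_self.le
    have hTlt : T < 2 ^ n * u 0 :=
      (ENNReal.div_lt_iff (Or.inl hne) (Or.inr hT)).1 (hn.trans_le hn2)
    exact (hbdd n).not_gt (hTlt.trans_le (hgrowth n))
  simp [hu0] at hlt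

def IsDyadicRiccatiSupersolution (k : ℝ) (f : ℝ → ℝ≥0∞) : Prop :=
  ∀ᵐ x ∂volume.restrict (Ioi 0),
    ENNReal.ofReal (k / x ^ 2) * (∫⁻ y in Ioo (x / 2) x, f y) ^ 2 ≤ f x

namespace IsDyadicRiccatiSupersolution

variable {k : ℝ} {f : ℝ → ℝ≥0∞}

theorem ae_restrict_Ioo (hf : IsDyadicRiccatiSupersolution k f) {a b : ℝ} (ha : 0 ≤ a) :
    ∀ᵐ x ∂volume.restrict (Ioo a b),
      ENNReal.ofReal (k / x ^ 2) * (∫⁻ y in Ioo (x / 2) x, f y) ^ 2 ≤ f x :=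
  ae_restrict_of_ae_restrict_of_subset (fun _ hx ↦ ha.trans_lt hx.1) hf

theorem lintegral_Ioo_ne_top (hf : IsDyadicRiccatiSupersolution k f) (hk : 0 < k)
    (hfin : ∀ x, f x ≠ ∞) {a c : ℝ} (ha : 0 < a) (hac : a ≤ c) (hc : c < 2 * a) :
    ∫⁻ x in Ioo a c, f x ≠ ∞ := by
  intro htop
  have : (ae (volume.restrict (Ioo c (2 * a)))).NeBot := by
    rw [ae_restrict_neBot, Real.volume_Ioo, ne_eq, ENNReal.ofReal_eq_zero, not_le]
    linarith
  obtain ⟨x, hx, hcx, hxa⟩ :=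
    ((hf.ae_restrict_Ioo (b := 2 * a) (by linarith)).and (ae_restrict_mem measurableSet_Ioo)).exists
  have hwindow : ∫⁻ y in Ioo (x / 2) x, f y = ∞ :=
    top_le_iff.1 (htop ▸ lintegral_mono_set (Ioo_subset_Ioo (by linarith) hcx.le))
  have hcoef : ENNReal.ofReal (k / x ^ 2) ≠ 0 := by
    rw [ne_eq, ENNReal.ofReal_eq_zero, not_le]
    have : 0 < x := by linarith
    positivity
  rw [hwindow, ENNReal.top_pow two_ne_zero, ENNReal.mul_top hcoef, top_le_iff] at hx
  exact hfin x hx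

theorem mul_sq_lintegral_le (hf : IsDyadicRiccatiSupersolution k f) (hk : 0 ≤ k)
    {a s t c : ℝ} (ha : 0 < a) (has : a ≤ s) (htc : t ≤ c) (hc : c ≤ 2 * a) :
    ENNReal.ofReal (k / c ^ 2) * (∫⁻ x in Ioo a s, f x) ^ 2 * volume (Ioo s t) ≤
      ∫⁻ x in Ioo s t, f x := by
  rw [← setLIntegral_const]
  refine lintegral_mono_ae ?_
  filter_upwards [hf.ae_restrict_Ioo (by linarith), ae_restrict_mem measurableSet_Ioo]
    with x hx ⟨hsx, hxt⟩
  have hx0 : 0 < x := by linarith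
  refine le_trans (mul_le_mul' (ENNReal.ofReal_le_ofReal ?_) ?_) hx
  · exact div_le_div_of_nonneg_left hk (by positivity) (by gcongr; linarith)
  · exact pow_le_pow_left' (lintegral_mono_set (Ioo_subset_Ioo (by linarith) hsx.le)) 2

theorem lintegral_Ioo_le (hf : IsDyadicRiccatiSupersolution k f) (hk : 0 < k)
    (hfin : ∀ x, f x ≠ ∞) {a b c : ℝ} (ha : 0 < a) (hab : a ≤ b) (hbc : b < c)
    (hc : c < 2 * a) :
    ∫⁻ x in Ioo a b, f x ≤ ENNReal.ofReal (4 * c ^ 2 / (k * (c - b))) := by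
  set t : ℕ → ℝ := fun n ↦ c - (c - b) / 2 ^ n with ht
  have ht_ge : ∀ n, b ≤ t n := fun n ↦ by
    have : (c - b) / 2 ^ n ≤ c - b := div_le_self (by linarith) (one_le_pow₀ one_le_two)
    simp only [ht]; linarith
  have ht_lt : ∀ n, t n < c := fun n ↦ by
    have : 0 < (c - b) / 2 ^ n := div_pos (by linarith) (by positivity)
    simp only [ht]; linarith
  have ht_succ : ∀ n, t (n + 1) - t n = (c - b) / 2 / 2 ^ n := fun n ↦ by
    simp only [ht]; field_simp; ring
  set u : ℕ → ℝ≥0∞ := fun n ↦ ∫⁻ x in Ioo a (t n), f x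
  set q := ENNReal.ofReal (k * (c - b) / (2 * c ^ 2))
  have hrec : ∀ n, q / 2 ^ n * u n ^ 2 ≤ u (n + 1) := by
    intro n
    have hcoef : q / 2 ^ n = ENNReal.ofReal (k / c ^ 2) * ENNReal.ofReal ((c - b) / 2 / 2 ^ n) := by
      rw [← ENNReal.ofReal_mul (by positivity), ← ENNReal.ofReal_ofNat 2,
        ← ENNReal.ofReal_pow zero_le_two, ← ENNReal.ofReal_div_of_pos (by positivity)]
      congr 1
      field_simp
    calc q / 2 ^ n * u n ^ 2
        = ENNReal.ofReal (k / c ^ 2) * u n ^ 2 * volume (Ioo (t n) (t (n + 1))) := by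
          rw [Real.volume_Ioo, ht_succ, hcoef]; ring
      _ ≤ ∫⁻ x in Ioo (t n) (t (n + 1)), f x :=
          hf.mul_sq_lintegral_le hk.le ha (hab.trans (ht_ge n)) (ht_lt _).le hc.le
      _ ≤ u (n + 1) := lintegral_mono_set (Ioo_subset_Ioo_left (hab.trans (ht_ge n)))
  have hq : q * u 0 ≤ 2 :=
    ENNReal.mul_le_two_of_div_pow_mul_sq_le (hf.lintegral_Ioo_ne_top hk hfin ha (by linarith) hc)
      (fun n ↦ lintegral_mono_set (Ioo_subset_Ioo_right (ht_lt n).le)) hrec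
  have hu0 : u 0 = ∫⁻ x in Ioo a b, f x := by simp [u, ht]
  have hq0 : 0 < k * (c - b) / (2 * c ^ 2) := by
    have : 0 < c - b := by linarith
    have : 0 < c := by linarith
    positivity
  rw [← hu0, show 4 * c ^ 2 / (k * (c - b)) = 2 / (k * (c - b) / (2 * c ^ 2)) by
      field_simp; ring, ENNReal.ofReal_div_of_pos hq0, ENNReal.ofReal_ofNat,
    ENNReal.le_div_iff_mul_le (Or.inl (ENNReal.ofReal_pos.2 hq0).ne') (Or.inl ENNReal.ofReal_ne_top),
    mul_comm]
  exact hq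

theorem lintegral_Ioo_half_le (hf : IsDyadicRiccatiSupersolution k f) (hk : 0 < k)
    (hfin : ∀ x, f x ≠ ∞) {R : ℝ} (hR : 0 < R) :
    ∫⁻ x in Ioo (R / 2) R, f x ≤ ENNReal.ofReal (343 / (3 * k) * R / 2) := by
  have hcover : Ioo (R / 2) R ⊆ Ioo (R / 2) (3 * R / 4) ∪ Ioo (2 * R / 3) R := fun x hx ↦ by
    rcases lt_or_ge x (3 * R / 4) with h | h
    · exact Or.inl ⟨hx.1, h⟩
    · exact Or.inr ⟨by linarith, hx.2⟩
  have hlow := hf.lintegral_Ioo_le hk hfin (a := R / 2) (b := 3 * R / 4) (c := 7 * R / 8)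
    (by positivity) (by linarith) (by linarith) (by linarith)
  have hhigh := hf.lintegral_Ioo_le hk hfin (a := 2 * R / 3) (b := R) (c := 7 * R / 6)
    (by positivity) (by linarith) (by linarith) (by linarith)
  rw [show 4 * (7 * R / 8) ^ 2 / (k * (7 * R / 8 - 3 * R / 4)) = 49 * R / (2 * k) by
    field_simp; ring] at hlow
  rw [show 4 * (7 * R / 6) ^ 2 / (k * (7 * R / 6 - R)) = 98 * R / (3 * k) by
    field_simp; ring] at hhigh
  calc ∫⁻ x in Ioo (R / 2) R, f x
      ≤ (∫⁻ x in Ioo (R / 2) (3 * R / 4), f x) + ∫⁻ x in Ioo (2 * R / 3) R, f x :=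
        (lintegral_mono_set hcover).trans (lintegral_union_le _ _ _)
    _ ≤ ENNReal.ofReal (49 * R / (2 * k)) + ENNReal.ofReal (98 * R / (3 * k)) :=
        add_le_add hlow hhigh
    _ = ENNReal.ofReal (343 / (3 * k) * R / 2) := by
        rw [← ENNReal.ofReal_add (by positivity) (by positivity)]
        congr 1
        field_simp
        ring

end IsDyadicRiccatiSupersolution

section Kernel

variable {K : ℝ → ℝ → ℝ} {k₀ lam : ℝ}

theorem le_kernel_of_homogeneous
    (hhom : ∀ a x y : ℝ, 0 < a → 0 < x → 0 < y → K (a * x) (a * y) = a ^ (2 * lam) * K x y)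
    (hlow : ∀ x y : ℝ, x ∈ Icc (1 / 4 : ℝ) 1 → y ∈ Icc (1 / 4 : ℝ) 1 → k₀ ≤ K x y)
    {x y z : ℝ} (hx : 0 < x) (hy : y ∈ Icc (x / 4) x) (hz : z ∈ Icc (x / 4) x) :
    k₀ * x ^ (2 * lam) ≤ K y z := by
  have hscale : ∀ w ∈ Icc (x / 4) x, w / x ∈ Icc (1 / 4 : ℝ) 1 ∧ x * (w / x) = w :=
    fun w hw ↦ ⟨⟨by rw [le_div_iff₀ hx]; linarith [hw.1], (div_le_one hx).2 hw.2⟩,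
      mul_div_cancel₀ w hx.ne'⟩
  obtain ⟨hy1, hy2⟩ := hscale y hy
  obtain ⟨hz1, hz2⟩ := hscale z hz
  rw [← hy2, ← hz2, hhom x _ _ hx (by linarith [hy1.1]) (by linarith [hz1.1])]
  exact (mul_comm _ _).trans_le (mul_le_mul_of_nonneg_left (hlow _ _ hy1 hz1) (by positivity))

theorem div_le_kernel_mul_rpow (hk₀ : 0 ≤ k₀) (hlam : 0 ≤ lam)
    (hhom : ∀ a x y : ℝ, 0 < a → 0 < x → 0 < y → K (a * x) (a * y) = a ^ (2 * lam) * K x y)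
    (hlow : ∀ x y : ℝ, x ∈ Icc (1 / 4 : ℝ) 1 → y ∈ Icc (1 / 4 : ℝ) 1 → k₀ ≤ K x y)
    {x y z : ℝ} (hx : 0 < x) (hy : y ∈ Ioo (x / 2) x) (hz : z ∈ Ioo (x / 2) x) :
    k₀ / x ≤ K y z * z ^ (-(1 + 2 * lam)) := by
  have hK := le_kernel_of_homogeneous hhom hlow hx ⟨by linarith [hy.1], hy.2.le⟩
    ⟨by linarith [hz.1], hz.2.le⟩
  calc k₀ / x = k₀ * x ^ (2 * lam) * x ^ (-(1 + 2 * lam)) := by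
        rw [mul_assoc, ← Real.rpow_add hx, show 2 * lam + -(1 + 2 * lam) = -1 by ring,
          Real.rpow_neg_one, div_eq_mul_inv]
    _ ≤ K y z * z ^ (-(1 + 2 * lam)) :=
        mul_le_mul hK (Real.rpow_le_rpow_of_nonpos (by linarith [hz.1]) hz.2.le (by linarith))
          (by positivity) ((by positivity : 0 ≤ k₀ * x ^ (2 * lam)).trans hK)

end Kernel

theorem isDyadicRiccatiSupersolution_of_profile_eq (K : ℝ → ℝ → ℝ) (k₀ lam hl : ℝ)
    (hk₀ : 0 ≤ k₀) (hlam : 0 ≤ lam) (hl0 : 0 ≤ hl)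
    (hhom : ∀ a x y : ℝ, 0 < a → 0 < x → 0 < y → K (a * x) (a * y) = a ^ (2 * lam) * K x y)
    (hlow : ∀ x y : ℝ, x ∈ Icc (1 / 4 : ℝ) 1 → y ∈ Icc (1 / 4 : ℝ) 1 → k₀ ≤ K x y)
    (h : ℝ → ℝ)
    (heq : ∀ᵐ x ∂(volume.restrict (Ioi (0:ℝ))),
      ENNReal.ofReal (h x)
        = ENNReal.ofReal (hl * x ^ (2 * lam - 1))
          * ∫⁻ y in Ioo (0:ℝ) x,
              ENNReal.ofReal (y ^ (-(2 * lam)) * h y)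
              * ∫⁻ z in Ioi (x - y),
                  ENNReal.ofReal (K y z * z ^ (-(1 + 2 * lam)) * h z)) :
    IsDyadicRiccatiSupersolution (hl * k₀) (fun x ↦ ENNReal.ofReal (h x)) := by
  filter_upwards [heq, ae_restrict_mem measurableSet_Ioi] with x hx (hx0 : 0 < x)
  set P := ∫⁻ y in Ioo (x / 2) x, ENNReal.ofReal (h y)
  have hinner : ∀ y ∈ Ioo (x / 2) x, ENNReal.ofReal (k₀ / x) * P ≤
      ∫⁻ z in Ioi (x - y), ENNReal.ofReal (K y z * z ^ (-(1 + 2 * lam)) * h z) := by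
    intro y hy
    calc ENNReal.ofReal (k₀ / x) * P
        = ∫⁻ z in Ioo (x / 2) x, ENNReal.ofReal (k₀ / x) * ENNReal.ofReal (h z) :=
          (lintegral_const_mul' _ _ ENNReal.ofReal_ne_top).symm
      _ ≤ ∫⁻ z in Ioo (x / 2) x, ENNReal.ofReal (K y z * z ^ (-(1 + 2 * lam)) * h z) := by
          refine setLIntegral_mono' measurableSet_Ioo fun z hz ↦ ?_
          have hweight := div_le_kernel_mul_rpow hk₀ hlam hhom hlow hx0 hy hz
          rw [ENNReal.ofReal_mul ((by positivity : 0 ≤ k₀ / x).trans hweight)]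
          gcongr
      _ ≤ _ := lintegral_mono_set fun z hz ↦ by
          simp only [mem_Ioi]; linarith [hy.1, hz.1]
  have houter : ENNReal.ofReal (x ^ (-(2 * lam))) * ENNReal.ofReal (k₀ / x) * P ^ 2 ≤
      ∫⁻ y in Ioo 0 x, ENNReal.ofReal (y ^ (-(2 * lam)) * h y) *
        ∫⁻ z in Ioi (x - y), ENNReal.ofReal (K y z * z ^ (-(1 + 2 * lam)) * h z) := by
    calc ENNReal.ofReal (x ^ (-(2 * lam))) * ENNReal.ofReal (k₀ / x) * P ^ 2
        = ENNReal.ofReal (k₀ / x) * P *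
            ∫⁻ y in Ioo (x / 2) x, ENNReal.ofReal (x ^ (-(2 * lam))) * ENNReal.ofReal (h y) := by
          rw [lintegral_const_mul' _ _ ENNReal.ofReal_ne_top]; ring
      _ ≤ ∫⁻ y in Ioo (x / 2) x, ENNReal.ofReal (k₀ / x) * P *
            (ENNReal.ofReal (x ^ (-(2 * lam))) * ENNReal.ofReal (h y)) :=
          lintegral_const_mul_le _ _
      _ ≤ ∫⁻ y in Ioo (x / 2) x, ENNReal.ofReal (y ^ (-(2 * lam)) * h y) *
            ∫⁻ z in Ioi (x - y), ENNReal.ofReal (K y z * z ^ (-(1 + 2 * lam)) * h z) := by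
          refine setLIntegral_mono' measurableSet_Ioo fun y hy ↦ ?_
          have hy0 : 0 < y := by linarith [hy.1]
          rw [mul_comm, ENNReal.ofReal_mul (by positivity)]
          exact mul_le_mul' (mul_le_mul_left
            (ENNReal.ofReal_le_ofReal (Real.rpow_le_rpow_of_nonpos hy0 hy.2.le (by linarith))) _)
            (hinner y hy)
      _ ≤ _ := lintegral_mono_set (Ioo_subset_Ioo_left (by positivity))
  have hcoef : ENNReal.ofReal (hl * k₀ / x ^ 2) = ENNReal.ofReal (hl * x ^ (2 * lam - 1)) *
      (ENNReal.ofReal (x ^ (-(2 * lam))) * ENNReal.ofReal (k₀ / x)) := by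
    rw [← ENNReal.ofReal_mul (by positivity), ← ENNReal.ofReal_mul (by positivity)]
    congr 1
    have hpow : x ^ (2 * lam - 1) * x ^ (-(2 * lam)) = x⁻¹ := by
      rw [← Real.rpow_add hx0, show 2 * lam - 1 + -(2 * lam) = -1 by ring, Real.rpow_neg_one]
    field_simp
    rw [mul_assoc, hpow]
    field_simp
  rw [hx, hcoef, mul_assoc, mul_assoc]
  gcongr
  rw [← mul_assoc]
  exact houter

theorem average_bound_general
    (K : ℝ → ℝ → ℝ) (k₀ α β lam hl : ℝ)
    (hk₀ : 0 < k₀)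
    (hα : 0 < α) (hαβ : α ≤ β)
    (hsum : α + β = 2*lam)
    (hhom : ∀ a x y : ℝ, 0 < a → 0 < x → 0 < y → K (a*x) (a*y) = a ^ (2*lam) * K x y)
    (hlow : ∀ x y : ℝ, x ∈ Set.Icc (1/4 : ℝ) 1 → y ∈ Set.Icc (1/4 : ℝ) 1 → k₀ ≤ K x y)
    (hlpos : 0 < hl)
    (h : ℝ → ℝ)
    (heq : ∀ᵐ x ∂(volume.restrict (Set.Ioi (0:ℝ))),
      ENNReal.ofReal (h x)
        = ENNReal.ofReal (hl * x ^ (2*lam - 1))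
          * ∫⁻ y in Set.Ioo (0:ℝ) x,
              ENNReal.ofReal (y ^ (-(2*lam)) * h y)
              * ∫⁻ z in Set.Ioi (x - y),
                  ENNReal.ofReal (K y z * z ^ (-(1+2*lam)) * h z)) :
    ∃ C > (0:ℝ), ∀ R > (0:ℝ),
      ∫⁻ x in Set.Ioo (R/2) R, ENNReal.ofReal (h x) ≤ ENNReal.ofReal (C * R / 2) := by
  have hk : 0 < hl * k₀ := mul_pos hlpos hk₀
  have hriccati := isDyadicRiccatiSupersolution_of_profile_eq K k₀ lam hl hk₀.le
    (by linarith) hlpos.le hhom hlow h heq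
  exact ⟨343 / (3 * (hl * k₀)), by positivity, fun R hR ↦
    hriccati.lintegral_Ioo_half_le hk (fun _ ↦ ENNReal.ofReal_ne_top) hR⟩

/-- uniform bound on dyadic averages of a solution `h` of the weak equation. -/
theorem average_bound
    (K : ℝ → ℝ → ℝ) (K₀ k₀ α β lam hl : ℝ)
    (hK₀ : 0 < K₀) (hk₀ : 0 < k₀)
    (hα : 0 < α) (hαβ : α ≤ β) (hβ : β < 1/2)
    (hsum : α + β = 2*lam)
    (hC1 : ContDiffOn ℝ 1 (Function.uncurry K) (Set.Ioi (0:ℝ) ×ˢ Set.Ioi (0:ℝ)))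
    (hsymm : ∀ x y : ℝ, K x y = K y x)
    (hhom : ∀ a x y : ℝ, 0 < a → 0 < x → 0 < y → K (a*x) (a*y) = a ^ (2*lam) * K x y)
    (hnonneg : ∀ x y : ℝ, 0 < x → 0 < y → 0 ≤ K x y)
    (hup : ∀ x y : ℝ, 0 < x → 0 < y → K x y ≤ K₀ * (x ^ α * y ^ β + x ^ β * y ^ α))
    (hlow : ∀ x y : ℝ, x ∈ Set.Icc (1/4 : ℝ) 1 → y ∈ Set.Icc (1/4 : ℝ) 1 → k₀ ≤ K x y)
    (hlpos : 0 < hl)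
    (hldef : hl = (∫ s in Set.Ioo (0:ℝ) 1,
        s ^ (-(2*lam)) * ∫ t in Set.Ioi (1-s), K s t * t ^ (-(1+2*lam)))⁻¹)
    (h : ℝ → ℝ) (hmeas : Measurable h) (hnn : ∀ x > (0:ℝ), 0 ≤ h x)
    (heq : ∀ᵐ x ∂(volume.restrict (Set.Ioi (0:ℝ))),
      ENNReal.ofReal (h x)
        = ENNReal.ofReal (hl * x ^ (2*lam - 1))
          * ∫⁻ y in Set.Ioo (0:ℝ) x,
              ENNReal.ofReal (y ^ (-(2*lam)) * h y)
              * ∫⁻ z in Set.Ioi (x - y),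
                  ENNReal.ofReal (K y z * z ^ (-(1+2*lam)) * h z)) :
    ∃ C > (0:ℝ), ∀ R > (0:ℝ),
      ∫⁻ x in Set.Ioo (R/2) R, ENNReal.ofReal (h x) ≤ ENNReal.ofReal (C * R / 2) :=
  average_bound_general K k₀ α β lam hl hk₀ hα hαβ hsum hhom hlow hlpos h heq
end

section
/- Let h: (0,∞) → [0,∞) be measurable with sup_{R>0} (2/R)∫_{R/2}^R h ≤ C₀. If α > 2λ - 1 (in particular if 0 < α and 2λ < 1), then for every x > 0, ∫₀^x y^{-2λ+α} h(y) dy ≤ C x^{1-2λ+α} for a constant C depending only on C₀, λ, α. -/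
/-!
Cover `(0, x)` by the dyadic intervals `(x / 2 ^ (k + 1), x / 2 ^ k]`. On the interval with right
end `R` the weight `y ^ β` is at most `max 1 (2 ^ (-β))` times `R ^ β`, so the average bound
controls that piece by a multiple of `R ^ (1 + β) = x ^ (1 + β) * (2 ^ (-(1 + β))) ^ k`, and these
bounds form a convergent geometric series because `1 + β > 0`.
-/

open MeasureTheory Real Set

theorem Ioo_zero_subset_iUnion_Ioc_div_two_pow (x : ℝ) :
    Ioo 0 x ⊆ ⋃ k : ℕ, Ioc (x / 2 ^ (k + 1)) (x / 2 ^ k) := by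
  rintro y ⟨hy0, hyx⟩
  obtain ⟨k, hk, hk'⟩ := exists_nat_pow_near ((one_le_div hy0).2 hyx.le) one_lt_two
  rw [le_div_iff₀ hy0, ← le_div_iff₀' (by positivity)] at hk
  rw [div_lt_iff₀ hy0, ← div_lt_iff₀' (by positivity)] at hk'
  exact mem_iUnion.2 ⟨k, hk', hk⟩

theorem rpow_le_max_mul_rpow_of_mem_Ioc {R y : ℝ} (β : ℝ) (hR : 0 < R) (hy : y ∈ Ioc (R / 2) R) :
    y ^ β ≤ max 1 (2 ^ (-β)) * R ^ β := by
  have hy0 : 0 < y := (half_pos hR).trans hy.1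
  rcases le_or_gt 0 β with hβ | hβ
  · calc y ^ β ≤ R ^ β := rpow_le_rpow hy0.le hy.2 hβ
      _ ≤ _ := le_mul_of_one_le_left (rpow_nonneg hR.le _) (le_max_left _ _)
  · calc y ^ β ≤ (R / 2) ^ β := rpow_le_rpow_of_nonpos (half_pos hR) hy.1.le hβ.le
      _ = 2 ^ (-β) * R ^ β := by
          rw [div_rpow hR.le zero_le_two, rpow_neg zero_le_two, div_eq_inv_mul]
      _ ≤ _ := mul_le_mul_of_nonneg_right (le_max_right _ _) (rpow_nonneg hR.le _)

theorem div_two_pow_rpow {x : ℝ} (hx : 0 ≤ x) (s : ℝ) (k : ℕ) :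
    (x / 2 ^ k) ^ s = x ^ s * ((2 : ℝ) ^ (-s)) ^ k := by
  rw [div_rpow hx (by positivity), ← rpow_pow_comm zero_le_two, rpow_neg zero_le_two, inv_pow,
    div_eq_mul_inv]

section DyadicAverage

variable {g : ℝ → ENNReal} {β C₀ : ℝ}

theorem setLIntegral_Ioc_half_rpow_mul_le {R : ℝ} (hR : 0 < R)
    (hg : ∫⁻ y in Ioo (R / 2) R, g y ≤ ENNReal.ofReal (C₀ * R / 2)) :
    ∫⁻ y in Ioc (R / 2) R, ENNReal.ofReal (y ^ β) * g y
      ≤ ENNReal.ofReal (max 1 (2 ^ (-β)) * C₀ / 2 * R ^ (1 + β)) := by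
  set K := max 1 ((2 : ℝ) ^ (-β))
  have hKR : 0 ≤ K * R ^ β := by positivity
  calc ∫⁻ y in Ioc (R / 2) R, ENNReal.ofReal (y ^ β) * g y
      ≤ ∫⁻ y in Ioc (R / 2) R, ENNReal.ofReal (K * R ^ β) * g y :=
        setLIntegral_mono' measurableSet_Ioc fun y hy => by
          gcongr; exact rpow_le_max_mul_rpow_of_mem_Ioc β hR hy
    _ = ENNReal.ofReal (K * R ^ β) * ∫⁻ y in Ioo (R / 2) R, g y := by
        rw [lintegral_const_mul' _ _ ENNReal.ofReal_ne_top,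
          Measure.restrict_congr_set Ioo_ae_eq_Ioc]
    _ ≤ ENNReal.ofReal (K * R ^ β) * ENNReal.ofReal (C₀ * R / 2) := by gcongr
    _ = _ := by
        rw [← ENNReal.ofReal_mul hKR, add_comm, rpow_add_one hR.ne']
        ring_nf

theorem lintegral_Ioo_zero_rpow_mul_le_of_dyadic_average (hβ : 0 < 1 + β)
    (hg : ∀ R > 0, ∫⁻ y in Ioo (R / 2) R, g y ≤ ENNReal.ofReal (C₀ * R / 2)) {x : ℝ}
    (hx : 0 < x) :
    ∫⁻ y in Ioo 0 x, ENNReal.ofReal (y ^ β) * g y ≤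
      ENNReal.ofReal (max 1 (2 ^ (-β)) * C₀ / 2 * (1 - 2 ^ (-(1 + β)))⁻¹ * x ^ (1 + β)) := by
  set A := max 1 ((2 : ℝ) ^ (-β)) * C₀ / 2
  set r := (2 : ℝ) ^ (-(1 + β))
  have hr0 : 0 ≤ r := by positivity
  have hr1 : r < 1 := rpow_lt_one_of_one_lt_of_neg one_lt_two (by linarith)
  have hpiece (k : ℕ) : ∫⁻ y in Ioc (x / 2 ^ (k + 1)) (x / 2 ^ k), ENNReal.ofReal (y ^ β) * g y
      ≤ ENNReal.ofReal (A * x ^ (1 + β)) * ENNReal.ofReal r ^ k := by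
    rw [← ENNReal.ofReal_pow hr0, ← ENNReal.ofReal_mul' (by positivity), mul_assoc,
      ← div_two_pow_rpow hx.le, pow_succ, ← div_div]
    exact setLIntegral_Ioc_half_rpow_mul_le (by positivity) (hg _ (by positivity))
  calc ∫⁻ y in Ioo 0 x, ENNReal.ofReal (y ^ β) * g y
      ≤ ∫⁻ y in ⋃ k : ℕ, Ioc (x / 2 ^ (k + 1)) (x / 2 ^ k), ENNReal.ofReal (y ^ β) * g y :=
        lintegral_mono_set (Ioo_zero_subset_iUnion_Ioc_div_two_pow x)
    _ ≤ ∑' k : ℕ, ∫⁻ y in Ioc (x / 2 ^ (k + 1)) (x / 2 ^ k), ENNReal.ofReal (y ^ β) * g y :=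
        lintegral_iUnion_le _ _
    _ ≤ ∑' k : ℕ, ENNReal.ofReal (A * x ^ (1 + β)) * ENNReal.ofReal r ^ k :=
        ENNReal.tsum_le_tsum hpiece
    _ = ENNReal.ofReal (A * (1 - r)⁻¹ * x ^ (1 + β)) := by
        rw [ENNReal.tsum_mul_left, ENNReal.tsum_geometric, mul_right_comm,
          ENNReal.ofReal_mul' (inv_nonneg.2 (sub_pos.2 hr1).le),
          ENNReal.ofReal_inv_of_pos (sub_pos.2 hr1), ENNReal.ofReal_sub _ hr0, ENNReal.ofReal_one]

end DyadicAverage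

theorem near_zero_integral_estimate_general
    (lam α C₀ : ℝ) (hlam : lam ∈ Set.Ioo (0:ℝ) (1/2))
    (hα : 0 < α) (hC₀ : 0 < C₀)
    (h : ℝ → ℝ)
    (hav : ∀ R > (0:ℝ),
      ∫⁻ x in Set.Ioo (R/2) R, ENNReal.ofReal (h x) ≤ ENNReal.ofReal (C₀ * R / 2)) :
    ∃ C > (0:ℝ), ∀ x > (0:ℝ),
      ∫⁻ y in Set.Ioo (0:ℝ) x, ENNReal.ofReal (y ^ (-(2*lam) + α) * h y)
        ≤ ENNReal.ofReal (C * x ^ (1 - 2*lam + α)) := by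
  set β := -(2 * lam) + α
  have hβ : 0 < 1 + β := by linarith [hlam.2]
  have hr : (2 : ℝ) ^ (-(1 + β)) < 1 := rpow_lt_one_of_one_lt_of_neg one_lt_two (by linarith)
  refine ⟨max 1 (2 ^ (-β)) * C₀ / 2 * (1 - 2 ^ (-(1 + β)))⁻¹,
    by have := sub_pos.2 hr; positivity, fun x hx => ?_⟩
  calc ∫⁻ y in Ioo 0 x, ENNReal.ofReal (y ^ β * h y)
      = ∫⁻ y in Ioo 0 x, ENNReal.ofReal (y ^ β) * ENNReal.ofReal (h y) :=
        setLIntegral_congr_fun measurableSet_Ioo fun y hy =>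
          ENNReal.ofReal_mul (rpow_nonneg hy.1.le _)
    _ ≤ _ := by
        convert lintegral_Ioo_zero_rpow_mul_le_of_dyadic_average hβ hav hx using 4
        ring

/-- near-zero integral estimate from bounded dyadic averages. -/
theorem near_zero_integral_estimate
    (lam α C₀ : ℝ) (hlam : lam ∈ Set.Ioo (0:ℝ) (1/2))
    (hα : 0 < α) (hC₀ : 0 < C₀)
    (h : ℝ → ℝ) (hmeas : Measurable h) (hnn : ∀ x > (0:ℝ), 0 ≤ h x)
    (hav : ∀ R > (0:ℝ),
      ∫⁻ x in Set.Ioo (R/2) R, ENNReal.ofReal (h x) ≤ ENNReal.ofReal (C₀ * R / 2)) :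
    ∃ C > (0:ℝ), ∀ x > (0:ℝ),
      ∫⁻ y in Set.Ioo (0:ℝ) x, ENNReal.ofReal (y ^ (-(2*lam) + α) * h y)
        ≤ ENNReal.ofReal (C * x ^ (1 - 2*lam + α)) :=
  near_zero_integral_estimate_general lam α C₀ hlam hα hC₀ h hav
end

section
/- Let h: (0,∞) → [0,∞) be measurable with sup_{R>0} (2/R)∫_{R/2}^R h ≤ C₀, and let 0 < β < 2λ < 1. Then for all 0 < y < x, ∫_{x-y}^x z^{-(1+2λ)+β} h(z) dz ≤ C ((x-y)^{-2λ+β} + x^{-2λ+β}) for a constant C depending only on C₀, λ, β. -/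
/-!
Split `(x - y, ∞)` into the dyadic intervals `[2ᵏ a, 2ᵏ⁺¹ a)`, `a = x - y`. On the `k`-th one
the weight `z ^ p`, `p = -(1+2λ)+β`, is at most `(2ᵏ a) ^ p`, and the bounded dyadic average of
`h` contributes a factor `C₀ 2ᵏ a`, so the `k`-th piece is at most `C₀ a ^ (p+1) (2 ^ (p+1))ᵏ`.
Since `p + 1 = β - 2λ < 0`, these form a convergent geometric series, with sum
`≲ (x - y) ^ (p+1)`.
-/

open MeasureTheory Real Set

lemma Ioi_subset_iUnion_Ico_two_pow_mul {a : ℝ} (ha : 0 < a) :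
    Ioi a ⊆ ⋃ k : ℕ, Ico (2 ^ k * a) (2 ^ (k + 1) * a) := by
  intro z hz
  obtain ⟨k, hk, hk'⟩ := exists_nat_pow_near ((one_lt_div ha).2 hz).le one_lt_two
  exact mem_iUnion.2 ⟨k, (le_div_iff₀ ha).1 hk, (div_lt_iff₀ ha).1 hk'⟩

lemma tsum_ofReal_mul_geometric (c : ℝ) {r : ℝ} (hr₀ : 0 ≤ r) (hr₁ : r < 1) :
    ∑' k : ℕ, ENNReal.ofReal (c * r ^ k) = ENNReal.ofReal (c / (1 - r)) := by
  have hr : 0 < 1 - r := sub_pos.2 hr₁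
  simp_rw [ENNReal.ofReal_mul' (pow_nonneg hr₀ _), ENNReal.ofReal_pow hr₀,
    ENNReal.tsum_mul_left, ENNReal.tsum_geometric, ← ENNReal.ofReal_one,
    ← ENNReal.ofReal_sub _ hr₀, ← ENNReal.ofReal_inv_of_pos hr,
    ← ENNReal.ofReal_mul' (inv_nonneg.2 hr.le), div_eq_mul_inv]

lemma setLIntegral_rpow_mul_le {p b : ℝ} (hp : p ≤ 0) (hb : 0 < b) (h : ℝ → ℝ) {s : Set ℝ}
    (hs : MeasurableSet s) (hsb : s ⊆ Ici b) :
    ∫⁻ z in s, ENNReal.ofReal (z ^ p * h z)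
      ≤ ENNReal.ofReal (b ^ p) * ∫⁻ z in s, ENNReal.ofReal (h z) := by
  rw [← lintegral_const_mul' _ _ ENNReal.ofReal_ne_top]
  refine setLIntegral_mono' hs fun z hz => ?_
  have hbz : b ≤ z := hsb hz
  rw [ENNReal.ofReal_mul (rpow_nonneg (hb.trans_le hbz).le p)]
  gcongr ?_ * _
  exact ENNReal.ofReal_le_ofReal (rpow_le_rpow_of_nonpos hb hbz hp)

lemma setLIntegral_Ico_two_mul_rpow_mul_le {p C₀ : ℝ} (hp : p ≤ 0) {h : ℝ → ℝ}
    (hav : ∀ R > (0:ℝ),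
      ∫⁻ x in Set.Ioo (R/2) R, ENNReal.ofReal (h x) ≤ ENNReal.ofReal (C₀ * R / 2))
    {b : ℝ} (hb : 0 < b) :
    ∫⁻ z in Ico b (2 * b), ENNReal.ofReal (z ^ p * h z)
      ≤ ENNReal.ofReal (C₀ * b ^ (p + 1)) := by
  have hdyadic := hav (2 * b) (by positivity)
  rw [mul_div_cancel_left₀ b two_ne_zero] at hdyadic
  calc ∫⁻ z in Ico b (2 * b), ENNReal.ofReal (z ^ p * h z)
      ≤ ENNReal.ofReal (b ^ p) * ∫⁻ z in Ico b (2 * b), ENNReal.ofReal (h z) :=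
        setLIntegral_rpow_mul_le hp hb h measurableSet_Ico Ico_subset_Ici_self
    _ = ENNReal.ofReal (b ^ p) * ∫⁻ z in Ioo b (2 * b), ENNReal.ofReal (h z) := by
        rw [setLIntegral_congr Ioo_ae_eq_Ico]
    _ ≤ ENNReal.ofReal (b ^ p) * ENNReal.ofReal (C₀ * (2 * b) / 2) := by gcongr
    _ = ENNReal.ofReal (C₀ * b ^ (p + 1)) := by
        rw [← ENNReal.ofReal_mul (rpow_nonneg hb.le p), rpow_add_one hb.ne']
        ring_nf

theorem lintegral_Ioi_rpow_mul_le_of_dyadic {p C₀ : ℝ} (hp : p + 1 < 0) {h : ℝ → ℝ}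
    (hav : ∀ R > (0:ℝ),
      ∫⁻ x in Set.Ioo (R/2) R, ENNReal.ofReal (h x) ≤ ENNReal.ofReal (C₀ * R / 2))
    {a : ℝ} (ha : 0 < a) :
    ∫⁻ z in Ioi a, ENNReal.ofReal (z ^ p * h z)
      ≤ ENNReal.ofReal (C₀ * a ^ (p + 1) / (1 - 2 ^ (p + 1))) := by
  have hpiece (k : ℕ) :
      ∫⁻ z in Ico (2 ^ k * a) (2 ^ (k + 1) * a), ENNReal.ofReal (z ^ p * h z) ≤
        ENNReal.ofReal (C₀ * a ^ (p + 1) * (2 ^ (p + 1)) ^ k) := by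
    rw [pow_succ', mul_assoc]
    refine (setLIntegral_Ico_two_mul_rpow_mul_le (by linarith) hav (by positivity)).trans_eq ?_
    rw [mul_rpow (by positivity) ha.le, rpow_pow_comm zero_le_two]
    ring_nf
  calc ∫⁻ z in Ioi a, ENNReal.ofReal (z ^ p * h z)
      ≤ ∫⁻ z in ⋃ k : ℕ, Ico (2 ^ k * a) (2 ^ (k + 1) * a),
          ENNReal.ofReal (z ^ p * h z) :=
        lintegral_mono_set (Ioi_subset_iUnion_Ico_two_pow_mul ha)
    _ ≤ ∑' k : ℕ, ∫⁻ z in Ico (2 ^ k * a) (2 ^ (k + 1) * a),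
          ENNReal.ofReal (z ^ p * h z) :=
        lintegral_iUnion_le _ _
    _ ≤ ∑' k : ℕ, ENNReal.ofReal (C₀ * a ^ (p + 1) * (2 ^ (p + 1)) ^ k) :=
        ENNReal.tsum_le_tsum hpiece
    _ = ENNReal.ofReal (C₀ * a ^ (p + 1) / (1 - 2 ^ (p + 1))) :=
        tsum_ofReal_mul_geometric _ (rpow_nonneg zero_le_two _)
          (rpow_lt_one_of_one_lt_of_neg one_lt_two hp)

theorem middle_integral_estimate_general
    (lam β C₀ : ℝ) (hβlam : β < 2*lam)
    (h : ℝ → ℝ)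
    (hav : ∀ R > (0:ℝ),
      ∫⁻ x in Set.Ioo (R/2) R, ENNReal.ofReal (h x) ≤ ENNReal.ofReal (C₀ * R / 2)) :
    ∃ C > (0:ℝ), ∀ x y : ℝ, 0 < y → y < x →
      ∫⁻ z in Set.Ioo (x - y) x, ENNReal.ofReal (z ^ (-(1+2*lam) + β) * h z)
        ≤ ENNReal.ofReal (C * ((x - y) ^ (-(2*lam) + β) + x ^ (-(2*lam) + β))) := by
  set p := -(1 + 2 * lam) + β
  have hp : p + 1 < 0 := by linarith
  have hρ : 0 < 1 - (2 : ℝ) ^ (p + 1) := sub_pos.2 (rpow_lt_one_of_one_lt_of_neg one_lt_two hp)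
  refine ⟨(|C₀| + 1) / (1 - 2 ^ (p + 1)), by positivity, fun x y hy hyx => ?_⟩
  have ha : 0 < x - y := sub_pos.2 hyx
  rw [show -(2 * lam) + β = p + 1 by ring]
  calc ∫⁻ z in Ioo (x - y) x, ENNReal.ofReal (z ^ p * h z)
      ≤ ∫⁻ z in Ioi (x - y), ENNReal.ofReal (z ^ p * h z) :=
        lintegral_mono_set Ioo_subset_Ioi_self
    _ ≤ ENNReal.ofReal (C₀ * (x - y) ^ (p + 1) / (1 - 2 ^ (p + 1))) :=
        lintegral_Ioi_rpow_mul_le_of_dyadic hp hav ha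
    _ ≤ _ := by
        gcongr ENNReal.ofReal ?_
        rw [div_mul_eq_mul_div]
        gcongr
        · linarith [le_abs_self C₀]
        · exact le_add_of_nonneg_right (rpow_nonneg (hy.trans hyx).le _)

/-- estimate for the integral over `(x-y, x)` from bounded dyadic averages. -/
theorem middle_integral_estimate
    (lam β C₀ : ℝ) (hlam : lam ∈ Set.Ioo (0:ℝ) (1/2))
    (hβ : 0 < β) (hβlam : β < 2*lam) (hC₀ : 0 < C₀)
    (h : ℝ → ℝ) (hmeas : Measurable h) (hnn : ∀ x > (0:ℝ), 0 ≤ h x)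
    (hav : ∀ R > (0:ℝ),
      ∫⁻ x in Set.Ioo (R/2) R, ENNReal.ofReal (h x) ≤ ENNReal.ofReal (C₀ * R / 2)) :
    ∃ C > (0:ℝ), ∀ x y : ℝ, 0 < y → y < x →
      ∫⁻ z in Set.Ioo (x - y) x, ENNReal.ofReal (z ^ (-(1+2*lam) + β) * h z)
        ≤ ENNReal.ofReal (C * ((x - y) ^ (-(2*lam) + β) + x ^ (-(2*lam) + β))) :=
  middle_integral_estimate_general lam β C₀ hβlam h hav
end

section
/- Let H: ℝ → [0,∞) be bounded by M and satisfy H(X) = ∫_{Ω_X} G(Y-X, Z-X) H(Y) H(Z) dY dZ for all X, where G satisfies the stated bounds. Then there exists D = D(λ, α, k₀, K₀, M) > 0 such that for every X₀ ∈ ℝ and every X > X₀, H(X) ≤ 2 H(X₀) e^{D(X - X₀)}. -/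
/-!
Fix `X₀` and `D`, and let `S` be the supremum of `H(Y) e^{-D(Y-X₀)}` over `Y ≥ X₀` (finite since
`H ≤ M`). Split the `Y`-integral of the equation at `X ≥ X₀` at `X₀`. For `Y < X₀`, homogeneity of
`K` gives `G(Y-X, Z-X) = e^{-(1-2λ)(X-X₀)} G(Y-X₀, Z-X₀)` and the `Z`-section of `Ω_X` lies in that
of `Ω_{X₀}`, so this part is at most `H(X₀)`. For `X₀ ≤ Y < X`, the upper bound on `K` and `H ≤ M`
bound the `Z`-integral by `h_λ K₀ M H(Y) (s^{-α}/α + s^{-β}/β)` with `s = X - Y`; together with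
`H(Y) ≤ S e^{D(Y-X₀)}` this part is at most `h_λ K₀ M S e^{D(X-X₀)}` times the Laplace transform
of `s^{-α}/α + s^{-β}/β` at `D`, which is `≤ S e^{D(X-X₀)} / 2` once `D` is large.
Hence `S ≤ H(X₀) + S/2`.
-/

open MeasureTheory Real Set Filter Topology
open scoped ENNReal

noncomputable section

namespace GrowthEstimate

lemma lintegral_ofReal_eq_of_integral_eq {Ω : Type*} [MeasurableSpace Ω] {μ : Measure Ω}
    {f : Ω → ℝ} {v : ℝ} (hf : 0 ≤ᵐ[μ] f) (h : ∫ a, f a ∂μ = v) (hv : v ≠ 0) :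
    ∫⁻ a, ENNReal.ofReal (f a) ∂μ = ENNReal.ofReal v := by
  rw [← h, ofReal_integral_eq_lintegral_ofReal (.of_integral_ne_zero (h ▸ hv)) hf]

lemma lintegral_Ioi_exp_neg_mul_sub {γ : ℝ} (hγ : 0 < γ) (a c : ℝ) :
    ∫⁻ z in Ioi c, ENNReal.ofReal (exp (-(γ * (z - a))))
      = ENNReal.ofReal (exp (-(γ * (c - a))) / γ) := by
  refine lintegral_ofReal_eq_of_integral_eq (ae_of_all _ fun z => (exp_pos _).le) ?_
    (by positivity)
  have hsplit : (fun z => exp (-(γ * (z - a)))) = fun z => exp (γ * a) * exp (-γ * z) := by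
    ext z; rw [← exp_add]; ring_nf
  rw [hsplit, integral_const_mul, integral_exp_mul_Ioi (neg_lt_zero.2 hγ), neg_div_neg_eq,
    ← mul_div_assoc, ← exp_add]
  ring_nf

lemma lintegral_Ioi_rpow_neg_mul_exp_neg_mul {γ D : ℝ} (hγ : γ < 1) (hD : 0 < D) :
    ∫⁻ s in Ioi 0, ENNReal.ofReal (s ^ (-γ) * exp (-(D * s)))
      = ENNReal.ofReal (Gamma (1 - γ) * D ^ (γ - 1)) := by
  have hΓ := integral_rpow_mul_exp_neg_mul_Ioi (sub_pos.2 hγ) hD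
  rw [sub_sub_cancel_left, one_div, inv_rpow hD.le, ← rpow_neg hD.le, neg_sub] at hΓ
  refine lintegral_ofReal_eq_of_integral_eq ?_ (hΓ.trans (mul_comm _ _))
    (by have := Gamma_pos_of_pos (sub_pos.2 hγ); positivity)
  filter_upwards [ae_restrict_mem measurableSet_Ioi] with s hs
  have : 0 < s := hs
  positivity

lemma mul_exp_neg_le_one_sub_exp_neg (s : ℝ) : s * exp (-s) ≤ 1 - exp (-s) := by
  have h := mul_le_mul_of_nonneg_right (add_one_le_exp s) (exp_pos (-s)).le
  rw [← exp_add, add_neg_cancel, exp_zero] at h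
  linarith

lemma exp_mul_one_sub_exp_neg_rpow_le {a b s : ℝ} (ha : 0 ≤ a) (hab : a + b ≤ 1) (hs : 0 < s) :
    exp (-((1 - b) * s)) * (1 - exp (-s)) ^ (-a) ≤ s ^ (-a) := by
  have hlow : (s * exp (-s)) ^ (-a) = s ^ (-a) * exp (a * s) := by
    rw [mul_rpow hs.le (exp_pos _).le, ← exp_mul]; ring_nf
  calc exp (-((1 - b) * s)) * (1 - exp (-s)) ^ (-a)
      ≤ exp (-((1 - b) * s)) * (s * exp (-s)) ^ (-a) := by
        gcongr ?_ * ?_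
        exact rpow_le_rpow_of_nonpos (by positivity) (mul_exp_neg_le_one_sub_exp_neg s)
          (neg_nonpos.2 ha)
    _ = s ^ (-a) * exp (-((1 - a - b) * s)) := by
        rw [hlow, mul_left_comm, ← exp_add]; ring_nf
    _ ≤ s ^ (-a) := mul_le_of_le_one_right (by positivity)
        (exp_le_one_iff.2 (by nlinarith))

lemma setLIntegral_Ico_comp_sub_left_le (f : ℝ → ℝ≥0∞) (x₀ y : ℝ) :
    ∫⁻ Y in Ico x₀ y, f (y - Y) ≤ ∫⁻ s in Ioi 0, f s :=
  calc ∫⁻ Y in Ico x₀ y, f (y - Y)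
      ≤ ∫⁻ Y in (y - ·) ⁻¹' Ioi 0, f (y - Y) := lintegral_mono_set fun _ hY => sub_pos.2 hY.2
    _ = ∫⁻ s in Ioi 0, f s :=
        (Measure.measurePreserving_sub_left volume y).setLIntegral_comp_preimage_emb
          (Homeomorph.subLeft y).measurableEmbedding f _

def G (K : ℝ → ℝ → ℝ) (hl lam Y Z : ℝ) : ℝ :=
  hl * exp ((1 - 2 * lam) * Y) * exp (-(2 * lam) * Z) * K (exp Y) (exp Z)

def fiberIntegral (K : ℝ → ℝ → ℝ) (hl lam : ℝ) (H : ℝ → ℝ) (X Y : ℝ) : ℝ≥0∞ :=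
  ∫⁻ Z in Ioi (X + log (1 - exp (Y - X))),
    ENNReal.ofReal (G K hl lam (Y - X) (Z - X) * H Y * H Z)

def laplaceWeight (α β D : ℝ) : ℝ :=
  Gamma (1 - α) * D ^ (α - 1) / α + Gamma (1 - β) * D ^ (β - 1) / β

lemma lintegral_Ioi_laplaceWeight {α β D : ℝ} (hα : 0 < α) (hα1 : α < 1) (hβ : 0 < β)
    (hβ1 : β < 1) (hD : 0 < D) :
    ∫⁻ s in Ioi 0, ENNReal.ofReal ((s ^ (-α) / α + s ^ (-β) / β) * exp (-(D * s)))
      = ENNReal.ofReal (laplaceWeight α β D) := by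
  have hsplit : ∀ s ∈ Ioi (0 : ℝ),
      ENNReal.ofReal ((s ^ (-α) / α + s ^ (-β) / β) * exp (-(D * s)))
        = ENNReal.ofReal α⁻¹ * ENNReal.ofReal (s ^ (-α) * exp (-(D * s)))
          + ENNReal.ofReal β⁻¹ * ENNReal.ofReal (s ^ (-β) * exp (-(D * s))) := fun s hs => by
    have : 0 < s := hs
    rw [← ENNReal.ofReal_mul (by positivity), ← ENNReal.ofReal_mul (by positivity),
      ← ENNReal.ofReal_add (by positivity) (by positivity)]
    ring_nf
  rw [setLIntegral_congr_fun measurableSet_Ioi hsplit, lintegral_add_left (by fun_prop),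
    lintegral_const_mul' _ _ ENNReal.ofReal_ne_top, lintegral_const_mul' _ _ ENNReal.ofReal_ne_top,
    lintegral_Ioi_rpow_neg_mul_exp_neg_mul hα1 hD, lintegral_Ioi_rpow_neg_mul_exp_neg_mul hβ1 hD,
    ← ENNReal.ofReal_mul (by positivity), ← ENNReal.ofReal_mul (by positivity),
    ← ENNReal.ofReal_add (by have := Gamma_pos_of_pos (sub_pos.2 hα1); positivity)
      (by have := Gamma_pos_of_pos (sub_pos.2 hβ1); positivity), laplaceWeight]
  ring_nf

lemma tendsto_laplaceWeight_atTop {α β : ℝ} (hα : α < 1) (hβ : β < 1) :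
    Tendsto (laplaceWeight α β) atTop (𝓝 0) := by
  have hpow : ∀ γ < (1 : ℝ), Tendsto (fun D : ℝ => D ^ (γ - 1)) atTop (𝓝 0) := fun γ hγ => by
    simpa only [neg_sub] using tendsto_rpow_neg_atTop (sub_pos.2 hγ)
  unfold laplaceWeight
  simpa using (((hpow α hα).const_mul (Gamma (1 - α))).div_const α).add
    (((hpow β hβ).const_mul (Gamma (1 - β))).div_const β)

section

variable {K : ℝ → ℝ → ℝ} {hl lam : ℝ}

lemma G_sub_sub
    (hhom : ∀ a x y : ℝ, 0 < a → 0 < x → 0 < y → K (a * x) (a * y) = a ^ (2 * lam) * K x y)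
    (Y Z t : ℝ) :
    G K hl lam (Y - t) (Z - t) = exp (-((1 - 2 * lam) * t)) * G K hl lam Y Z := by
  have hK : K (exp (Y - t)) (exp (Z - t)) = exp (-(2 * lam * t)) * K (exp Y) (exp Z) := by
    rw [sub_eq_neg_add, exp_add, sub_eq_neg_add, exp_add, hhom _ _ _ (exp_pos _) (exp_pos _)
      (exp_pos _), ← exp_mul]
    ring_nf
  simp only [G, hK]
  simp only [mul_comm, mul_left_comm, mul_assoc, ← exp_add]
  ring_nf

lemma G_le {K₀ α β : ℝ} (hsum : α + β = 2 * lam)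
    (hup : ∀ x y : ℝ, 0 < x → 0 < y → K x y ≤ K₀ * (x ^ α * y ^ β + x ^ β * y ^ α))
    (hl0 : 0 ≤ hl) (Y Z : ℝ) :
    G K hl lam Y Z
      ≤ hl * K₀ * (exp ((1 - β) * Y) * exp (-(α * Z)) + exp ((1 - α) * Y) * exp (-(β * Z))) :=
  calc G K hl lam Y Z
      ≤ hl * exp ((1 - 2 * lam) * Y) * exp (-(2 * lam) * Z)
          * (K₀ * (exp Y ^ α * exp Z ^ β + exp Y ^ β * exp Z ^ α)) := by
        unfold G; gcongr; exact hup _ _ (exp_pos _) (exp_pos _)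
    _ = hl * K₀ * (exp ((1 - 2 * lam) * Y + -(2 * lam) * Z + (Y * α + Z * β))
          + exp ((1 - 2 * lam) * Y + -(2 * lam) * Z + (Y * β + Z * α))) := by
        simp only [← exp_mul, exp_add]; ring
    _ = _ := by
        rw [← hsum, ← exp_add, ← exp_add]; ring_nf

lemma add_log_one_sub_exp_sub {X Y : ℝ} (h : Y < X) :
    X + log (1 - exp (Y - X)) = log (exp X - exp Y) := by
  have hpos : 0 < exp X - exp Y := sub_pos.2 (exp_lt_exp.2 h)
  rw [exp_sub, one_sub_div (exp_ne_zero X), log_div hpos.ne' (exp_ne_zero X), log_exp]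
  ring

lemma add_log_one_sub_exp_sub_mono {X X' Y : ℝ} (hY : Y < X) (hX : X ≤ X') :
    X + log (1 - exp (Y - X)) ≤ X' + log (1 - exp (Y - X')) := by
  rw [add_log_one_sub_exp_sub hY, add_log_one_sub_exp_sub (hY.trans_le hX)]
  exact log_le_log (sub_pos.2 (exp_lt_exp.2 hY)) (by gcongr)

lemma lintegral_Ioi_add_log_exp_neg_mul {γ X Y : ℝ} (hγ : 0 < γ) (hY : Y < X) :
    ∫⁻ Z in Ioi (X + log (1 - exp (Y - X))), ENNReal.ofReal (exp (-(γ * (Z - X))))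
      = ENNReal.ofReal ((1 - exp (Y - X)) ^ (-γ) / γ) := by
  have ht : 0 < 1 - exp (Y - X) := sub_pos.2 (exp_lt_one_iff.2 (sub_neg.2 hY))
  rw [lintegral_Ioi_exp_neg_mul_sub hγ, add_sub_cancel_left, rpow_def_of_pos ht]
  ring_nf

variable {H : ℝ → ℝ}

lemma fiberIntegral_le_mul_fiberIntegral
    (hhom : ∀ a x y : ℝ, 0 < a → 0 < x → 0 < y → K (a * x) (a * y) = a ^ (2 * lam) * K x y)
    {x₀ y Y : ℝ} (hY : Y < x₀) (hy : x₀ ≤ y) :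
    fiberIntegral K hl lam H y Y
      ≤ ENNReal.ofReal (exp (-((1 - 2 * lam) * (y - x₀)))) * fiberIntegral K hl lam H x₀ Y := by
  have hG : ∀ Z, G K hl lam (Y - y) (Z - y)
      = exp (-((1 - 2 * lam) * (y - x₀))) * G K hl lam (Y - x₀) (Z - x₀) := fun Z => by
    rw [← G_sub_sub hhom, sub_sub_sub_cancel_right, sub_sub_sub_cancel_right]
  calc fiberIntegral K hl lam H y Y
      = ∫⁻ Z in Ioi (y + log (1 - exp (Y - y))), ENNReal.ofReal (exp (-((1 - 2 * lam) * (y - x₀))))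
          * ENNReal.ofReal (G K hl lam (Y - x₀) (Z - x₀) * H Y * H Z) := by
        refine lintegral_congr fun Z => ?_
        simp only [hG, mul_assoc, ENNReal.ofReal_mul (exp_pos _).le]
    _ = ENNReal.ofReal (exp (-((1 - 2 * lam) * (y - x₀))))
          * ∫⁻ Z in Ioi (y + log (1 - exp (Y - y))),
              ENNReal.ofReal (G K hl lam (Y - x₀) (Z - x₀) * H Y * H Z) :=
        lintegral_const_mul' _ _ ENNReal.ofReal_ne_top
    _ ≤ _ := by
        gcongr
        exact lintegral_mono_set (Ioi_subset_Ioi (add_log_one_sub_exp_sub_mono hY hy))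

lemma lintegral_Iio_fiberIntegral_le
    (hhom : ∀ a x y : ℝ, 0 < a → 0 < x → 0 < y → K (a * x) (a * y) = a ^ (2 * lam) * K x y)
    (hlam : 2 * lam ≤ 1)
    (heq : ∀ X, ENNReal.ofReal (H X) = ∫⁻ Y in Iio X, fiberIntegral K hl lam H X Y)
    {x₀ y : ℝ} (hy : x₀ ≤ y) :
    ∫⁻ Y in Iio x₀, fiberIntegral K hl lam H y Y ≤ ENNReal.ofReal (H x₀) :=
  calc ∫⁻ Y in Iio x₀, fiberIntegral K hl lam H y Y
      ≤ ∫⁻ Y in Iio x₀, ENNReal.ofReal (exp (-((1 - 2 * lam) * (y - x₀))))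
          * fiberIntegral K hl lam H x₀ Y :=
        setLIntegral_mono' measurableSet_Iio fun _ hY =>
          fiberIntegral_le_mul_fiberIntegral hhom hY hy
    _ = ENNReal.ofReal (exp (-((1 - 2 * lam) * (y - x₀)))) * ENNReal.ofReal (H x₀) := by
        rw [lintegral_const_mul' _ _ ENNReal.ofReal_ne_top, heq]
    _ ≤ ENNReal.ofReal (H x₀) :=
        mul_le_of_le_one_left' (ENNReal.ofReal_le_one.2 (exp_le_one_iff.2
          (neg_nonpos.2 (mul_nonneg (by linarith) (sub_nonneg.2 hy)))))

lemma G_sub_mul_le {K₀ α β M : ℝ} (hsum : α + β = 2 * lam)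
    (hup : ∀ x y : ℝ, 0 < x → 0 < y → K x y ≤ K₀ * (x ^ α * y ^ β + x ^ β * y ^ α))
    (hl0 : 0 ≤ hl) (hK₀ : 0 ≤ K₀) (hH0 : ∀ X, 0 ≤ H X) (hHM : ∀ X, H X ≤ M) (X Y Z : ℝ) :
    G K hl lam (Y - X) (Z - X) * H Y * H Z
      ≤ hl * K₀ * M * H Y * exp ((1 - β) * (Y - X)) * exp (-(α * (Z - X)))
        + hl * K₀ * M * H Y * exp ((1 - α) * (Y - X)) * exp (-(β * (Z - X))) :=
  calc G K hl lam (Y - X) (Z - X) * H Y * H Z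
      ≤ hl * K₀ * (exp ((1 - β) * (Y - X)) * exp (-(α * (Z - X)))
          + exp ((1 - α) * (Y - X)) * exp (-(β * (Z - X)))) * H Y * M := by
        have := hH0 Y
        have := hH0 Z
        gcongr
        exacts [G_le hsum hup hl0 _ _, hHM Z]
    _ = _ := by ring

lemma fiberIntegral_le {K₀ α β M : ℝ} (hsum : α + β = 2 * lam) (hα : 0 < α) (hβ : 0 < β)
    (hlam : 2 * lam ≤ 1)
    (hup : ∀ x y : ℝ, 0 < x → 0 < y → K x y ≤ K₀ * (x ^ α * y ^ β + x ^ β * y ^ α))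
    (hl0 : 0 ≤ hl) (hK₀ : 0 ≤ K₀) (hH0 : ∀ X, 0 ≤ H X) (hHM : ∀ X, H X ≤ M)
    {X Y : ℝ} (hY : Y < X) :
    fiberIntegral K hl lam H X Y
      ≤ ENNReal.ofReal (hl * K₀ * M * H Y * ((X - Y) ^ (-α) / α + (X - Y) ^ (-β) / β)) := by
  set A := hl * K₀ * M * H Y * exp ((1 - β) * (Y - X))
  set B := hl * K₀ * M * H Y * exp ((1 - α) * (Y - X))
  have hM : 0 ≤ M := (hH0 X).trans (hHM X)
  have hA : 0 ≤ A := by have := hH0 Y; positivity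
  have hB : 0 ≤ B := by have := hH0 Y; positivity
  have ht : 0 ≤ 1 - exp (Y - X) := sub_nonneg.2 (exp_le_one_iff.2 (sub_nonpos.2 hY.le))
  have htα := rpow_nonneg ht (-α)
  have htβ := rpow_nonneg ht (-β)
  calc fiberIntegral K hl lam H X Y
      ≤ ∫⁻ Z in Ioi (X + log (1 - exp (Y - X))),
          (ENNReal.ofReal A * ENNReal.ofReal (exp (-(α * (Z - X))))
            + ENNReal.ofReal B * ENNReal.ofReal (exp (-(β * (Z - X))))) := by
        refine lintegral_mono fun Z => ?_
        rw [← ENNReal.ofReal_mul hA, ← ENNReal.ofReal_mul hB,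
          ← ENNReal.ofReal_add (by positivity) (by positivity)]
        exact ENNReal.ofReal_le_ofReal (G_sub_mul_le hsum hup hl0 hK₀ hH0 hHM X Y Z)
    _ = ENNReal.ofReal (A * ((1 - exp (Y - X)) ^ (-α) / α)
          + B * ((1 - exp (Y - X)) ^ (-β) / β)) := by
        rw [lintegral_add_left (by fun_prop), lintegral_const_mul' _ _ ENNReal.ofReal_ne_top,
          lintegral_const_mul' _ _ ENNReal.ofReal_ne_top,
          lintegral_Ioi_add_log_exp_neg_mul hα hY, lintegral_Ioi_add_log_exp_neg_mul hβ hY,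
          ← ENNReal.ofReal_mul hA, ← ENNReal.ofReal_mul hB,
          ← ENNReal.ofReal_add (by positivity) (by positivity)]
    _ ≤ _ := by
        have hs : 0 < X - Y := sub_pos.2 hY
        have hα' := exp_mul_one_sub_exp_neg_rpow_le (b := β) hα.le (by linarith) hs
        have hβ' := exp_mul_one_sub_exp_neg_rpow_le (b := α) hβ.le (by linarith) hs
        have := hH0 Y
        refine ENNReal.ofReal_le_ofReal ?_
        simp only [A, B, ← neg_sub X Y, mul_neg]
        calc _ = hl * K₀ * M * H Y
              * (exp (-((1 - β) * (X - Y))) * (1 - exp (-(X - Y))) ^ (-α) / α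
                + exp (-((1 - α) * (X - Y))) * (1 - exp (-(X - Y))) ^ (-β) / β) := by ring
          _ ≤ _ := by gcongr

lemma lintegral_Ico_fiberIntegral_le {K₀ α β M : ℝ} (hsum : α + β = 2 * lam) (hα : 0 < α)
    (hβ : 0 < β) (hlam : 2 * lam ≤ 1)
    (hup : ∀ x y : ℝ, 0 < x → 0 < y → K x y ≤ K₀ * (x ^ α * y ^ β + x ^ β * y ^ α))
    (hl0 : 0 ≤ hl) (hK₀ : 0 ≤ K₀) (hH0 : ∀ X, 0 ≤ H X) (hHM : ∀ X, H X ≤ M)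
    {D S x₀ y : ℝ} (hD : 0 < D) (hS : ∀ Y ∈ Ici x₀, H Y ≤ S * exp (D * (Y - x₀))) :
    ∫⁻ Y in Ico x₀ y, fiberIntegral K hl lam H y Y
      ≤ ENNReal.ofReal (hl * K₀ * M * S * exp (D * (y - x₀)) * laplaceWeight α β D) := by
  set k : ℝ → ℝ := fun s => (s ^ (-α) / α + s ^ (-β) / β) * exp (-(D * s))
  have hM : 0 ≤ M := (hH0 x₀).trans (hHM x₀)
  have hS0 : 0 ≤ S := by simpa using (hH0 x₀).trans (hS x₀ self_mem_Ici)
  have hC : 0 ≤ hl * K₀ * M * S * exp (D * (y - x₀)) := by positivity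
  have hpt : ∀ Y ∈ Ico x₀ y, fiberIntegral K hl lam H y Y
      ≤ ENNReal.ofReal (hl * K₀ * M * S * exp (D * (y - x₀))) * ENNReal.ofReal (k (y - Y)) := by
    intro Y hY
    have hs : 0 < y - Y := sub_pos.2 hY.2
    have hexp : exp (D * (Y - x₀)) = exp (D * (y - x₀)) * exp (-(D * (y - Y))) := by
      rw [← exp_add]; ring_nf
    refine (fiberIntegral_le hsum hα hβ hlam hup hl0 hK₀ hH0 hHM hY.2).trans ?_
    rw [← ENNReal.ofReal_mul hC]
    refine ENNReal.ofReal_le_ofReal ?_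
    calc hl * K₀ * M * H Y * ((y - Y) ^ (-α) / α + (y - Y) ^ (-β) / β)
        ≤ hl * K₀ * M * (S * exp (D * (Y - x₀)))
            * ((y - Y) ^ (-α) / α + (y - Y) ^ (-β) / β) := by
          gcongr; exact hS Y hY.1
      _ = _ := by rw [hexp]; ring
  calc ∫⁻ Y in Ico x₀ y, fiberIntegral K hl lam H y Y
      ≤ ∫⁻ Y in Ico x₀ y, ENNReal.ofReal (hl * K₀ * M * S * exp (D * (y - x₀)))
          * ENNReal.ofReal (k (y - Y)) := setLIntegral_mono' measurableSet_Ico hpt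
    _ = ENNReal.ofReal (hl * K₀ * M * S * exp (D * (y - x₀)))
          * ∫⁻ Y in Ico x₀ y, ENNReal.ofReal (k (y - Y)) :=
        lintegral_const_mul' _ _ ENNReal.ofReal_ne_top
    _ ≤ ENNReal.ofReal (hl * K₀ * M * S * exp (D * (y - x₀)))
          * ∫⁻ s in Ioi 0, ENNReal.ofReal (k s) := by
        gcongr _ * ?_
        exact setLIntegral_Ico_comp_sub_left_le (fun s => ENNReal.ofReal (k s)) x₀ y
    _ = _ := by
        rw [lintegral_Ioi_laplaceWeight hα (by linarith) hβ (by linarith) hD,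
          ← ENNReal.ofReal_mul hC]

lemma le_add_half_mul_exp {K₀ α β M : ℝ} (hsum : α + β = 2 * lam) (hα : 0 < α)
    (hβ : 0 < β) (hlam : 2 * lam ≤ 1)
    (hhom : ∀ a x y : ℝ, 0 < a → 0 < x → 0 < y → K (a * x) (a * y) = a ^ (2 * lam) * K x y)
    (hup : ∀ x y : ℝ, 0 < x → 0 < y → K x y ≤ K₀ * (x ^ α * y ^ β + x ^ β * y ^ α))
    (hl0 : 0 ≤ hl) (hK₀ : 0 ≤ K₀) (hH0 : ∀ X, 0 ≤ H X) (hHM : ∀ X, H X ≤ M)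
    (heq : ∀ X, ENNReal.ofReal (H X) = ∫⁻ Y in Iio X, fiberIntegral K hl lam H X Y)
    {D : ℝ} (hD : 0 < D) (hDw : hl * K₀ * M * laplaceWeight α β D ≤ 1 / 2)
    {S x₀ y : ℝ} (hy : x₀ ≤ y) (hS : ∀ Y ∈ Ici x₀, H Y ≤ S * exp (D * (Y - x₀))) :
    H y ≤ H x₀ + S / 2 * exp (D * (y - x₀)) := by
  have hS0 : 0 ≤ S := by simpa using (hH0 x₀).trans (hS x₀ self_mem_Ici)
  have hnear : hl * K₀ * M * S * exp (D * (y - x₀)) * laplaceWeight α β D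
      ≤ S / 2 * exp (D * (y - x₀)) :=
    calc _ = (hl * K₀ * M * laplaceWeight α β D) * (S * exp (D * (y - x₀))) := by ring
      _ ≤ 1 / 2 * (S * exp (D * (y - x₀))) := by gcongr
      _ = _ := by ring
  refine (ENNReal.ofReal_le_ofReal_iff (by have := hH0 x₀; positivity)).1 ?_
  rw [heq, ← Iio_union_Ico_eq_Iio hy, lintegral_union measurableSet_Ico
      ((Iio_disjoint_Ici le_rfl).mono_right Ico_subset_Ici_self),
    ENNReal.ofReal_add (hH0 x₀) (by positivity)]
  gcongr
  · exact lintegral_Iio_fiberIntegral_le hhom hlam heq hy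
  · exact (lintegral_Ico_fiberIntegral_le hsum hα hβ hlam hup hl0 hK₀ hH0 hHM hD hS).trans
      (ENNReal.ofReal_le_ofReal hnear)

end

lemma le_two_mul_of_le_add_half {ι : Type*} {s : Set ι} {f : ι → ℝ} {a : ℝ}
    (hf : BddAbove (f '' s)) (h : ∀ S, (∀ i ∈ s, f i ≤ S) → ∀ i ∈ s, f i ≤ a + S / 2) :
    ∀ i ∈ s, f i ≤ 2 * a := by
  intro i hi
  have hsup : ∀ j ∈ s, f j ≤ sSup (f '' s) := fun j hj => le_csSup hf (mem_image_of_mem f hj)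
  have : sSup (f '' s) ≤ a + sSup (f '' s) / 2 :=
    csSup_le ⟨f i, mem_image_of_mem f hi⟩ (forall_mem_image.2 (h _ hsup))
  linarith [hsup i hi]

lemma le_two_mul_mul_exp_of_le_add_half {H : ℝ → ℝ} {M D x₀ : ℝ} (hD : 0 ≤ D)
    (hH0 : ∀ X, 0 ≤ H X) (hHM : ∀ X, H X ≤ M)
    (h : ∀ S, (∀ Y ∈ Ici x₀, H Y ≤ S * exp (D * (Y - x₀))) →
      ∀ y ∈ Ici x₀, H y ≤ H x₀ + S / 2 * exp (D * (y - x₀))) :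
    ∀ y ∈ Ici x₀, H y ≤ 2 * H x₀ * exp (D * (y - x₀)) := by
  have hexp : ∀ y ∈ Ici x₀, 1 ≤ exp (D * (y - x₀)) := fun y hy =>
    one_le_exp (mul_nonneg hD (sub_nonneg.2 hy))
  have hf := le_two_mul_of_le_add_half (s := Ici x₀) (f := fun y => H y / exp (D * (y - x₀)))
    (a := H x₀)
    ⟨M, forall_mem_image.2 fun y hy => (div_le_self (hH0 y) (hexp y hy)).trans (hHM y)⟩
    fun S hS y hy => by
      have hHy := h S (fun Y hY => (div_le_iff₀ (exp_pos _)).1 (hS Y hY)) y hy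
      calc H y / exp (D * (y - x₀)) ≤ H x₀ / exp (D * (y - x₀)) + S / 2 := by
            rw [div_le_iff₀ (exp_pos _), add_mul, div_mul_cancel₀ _ (exp_ne_zero _)]; exact hHy
        _ ≤ H x₀ + S / 2 := by gcongr; exact div_le_self (hH0 x₀) (hexp y hy)
  exact fun y hy => (div_le_iff₀ (exp_pos _)).1 (hf y hy)

end GrowthEstimate

end

theorem growth_estimate_general
    (K : ℝ → ℝ → ℝ) (K₀ α β lam hl M : ℝ)
    (hK₀ : 0 < K₀)
    (hα : 0 < α) (hαβ : α ≤ β) (hβ : β < 1/2)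
    (hsum : α + β = 2*lam)
    (hhom : ∀ a x y : ℝ, 0 < a → 0 < x → 0 < y → K (a*x) (a*y) = a ^ (2*lam) * K x y)
    (hup : ∀ x y : ℝ, 0 < x → 0 < y → K x y ≤ K₀ * (x ^ α * y ^ β + x ^ β * y ^ α))
    (hlpos : 0 < hl)
    (H : ℝ → ℝ) (hH0 : ∀ X, 0 ≤ H X) (hHM : ∀ X, H X ≤ M)
    (heq : ∀ X : ℝ,
      ENNReal.ofReal (H X)
        = ∫⁻ Y in Set.Iio X,
            ∫⁻ Z in Set.Ioi (X + Real.log (1 - Real.exp (Y - X))),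
              ENNReal.ofReal
                (hl * Real.exp ((1-2*lam)*(Y - X)) * Real.exp (-(2*lam)*(Z - X))
                  * K (Real.exp (Y - X)) (Real.exp (Z - X)) * H Y * H Z)) :
    ∃ D > (0:ℝ), ∀ X₀ X : ℝ, X₀ < X →
      H X ≤ 2 * H X₀ * Real.exp (D * (X - X₀)) := by
  have hβ0 : 0 < β := hα.trans_le hαβ
  have hlam : 2 * lam ≤ 1 := by linarith
  have hweight := (GrowthEstimate.tendsto_laplaceWeight_atTop (α := α) (β := β) (by linarith)
    (by linarith)).const_mul (hl * K₀ * M)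
  obtain ⟨D, hDw, hD⟩ :=
    ((hweight.eventually_le_const (by norm_num : hl * K₀ * M * 0 < 1 / 2)).and
      (eventually_gt_atTop 0)).exists
  refine ⟨D, hD, fun x₀ x hx => ?_⟩
  exact GrowthEstimate.le_two_mul_mul_exp_of_le_add_half hD.le hH0 hHM
    (fun S hS y hy => GrowthEstimate.le_add_half_mul_exp hsum hα hβ0 hlam hhom hup hlpos.le
      hK₀.le hH0 hHM heq hD hDw hy hS) x hx.le

/-- exponential growth control for solutions of the `H`-equation. -/
theorem growth_estimate
    (K : ℝ → ℝ → ℝ) (K₀ k₀ α β lam hl M : ℝ)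
    (hK₀ : 0 < K₀) (hk₀ : 0 < k₀)
    (hα : 0 < α) (hαβ : α ≤ β) (hβ : β < 1/2)
    (hsum : α + β = 2*lam) (hlam : lam ∈ Set.Ioo (0:ℝ) (1/2))
    (hC1 : ContDiffOn ℝ 1 (Function.uncurry K) (Set.Ioi (0:ℝ) ×ˢ Set.Ioi (0:ℝ)))
    (hsymm : ∀ x y : ℝ, K x y = K y x)
    (hhom : ∀ a x y : ℝ, 0 < a → 0 < x → 0 < y → K (a*x) (a*y) = a ^ (2*lam) * K x y)
    (hnonneg : ∀ x y : ℝ, 0 < x → 0 < y → 0 ≤ K x y)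
    (hup : ∀ x y : ℝ, 0 < x → 0 < y → K x y ≤ K₀ * (x ^ α * y ^ β + x ^ β * y ^ α))
    (hlow : ∀ x y : ℝ, x ∈ Set.Icc (1/4 : ℝ) 1 → y ∈ Set.Icc (1/4 : ℝ) 1 → k₀ ≤ K x y)
    (hlpos : 0 < hl) (hM : 0 < M)
    (H : ℝ → ℝ) (hHmeas : Measurable H) (hH0 : ∀ X, 0 ≤ H X) (hHM : ∀ X, H X ≤ M)
    (heq : ∀ X : ℝ,
      ENNReal.ofReal (H X)
        = ∫⁻ Y in Set.Iio X,
            ∫⁻ Z in Set.Ioi (X + Real.log (1 - Real.exp (Y - X))),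
              ENNReal.ofReal
                (hl * Real.exp ((1-2*lam)*(Y - X)) * Real.exp (-(2*lam)*(Z - X))
                  * K (Real.exp (Y - X)) (Real.exp (Z - X)) * H Y * H Z)) :
    ∃ D > (0:ℝ), ∀ X₀ X : ℝ, X₀ < X →
      H X ≤ 2 * H X₀ * Real.exp (D * (X - X₀)) :=
  growth_estimate_general K K₀ α β lam hl M hK₀ hα hαβ hβ hsum hhom hup hlpos H hH0 hHM heq
end

section
/- For λ ∈ (0,1/2), 0 < α ≤ β < 1/2 with α + β = 2λ, and any ε ∈ (0,1], one has ∫_{-ε}^0 ∫_{log(1-e^Y)}^∞ [e^{(1-2λ+α)Y} e^{(β-2λ)Z} + e^{(1-2λ+β)Y} e^{(α-2λ)Z}] dZ dY ≤ C ε^{1-2λ+α} for a constant C depending only on λ, α, β; in particular this double integral tends to 0 as ε → 0. -/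
/-!
Since α + β = 2λ, the integrand is `e^{(1-β)Y} e^{-αZ} + e^{(1-α)Y} e^{-βZ}`, and for `Y < 0` the
`Y`-factors are at most `1`. The `Z`-integral over `(log (1 - e^Y), ∞)` is then at most
`(1 - e^Y)^{-α}/α + (1 - e^Y)^{-β}/β`. On `[-1, 0)` we have `1 - e^Y ≥ e^{-1} |Y|`, and `α ≤ β`
lets `|Y|^{-β}` dominate both terms, so the inner integral is `O(|Y|^{-β})`, and integrating over
`(-ε, 0)` gives `O(ε^{1-β}) = O(ε^{1-2λ+α})`.
-/

open MeasureTheory Real Set Filter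
open scoped ENNReal Topology

lemma lintegral_exp_neg_mul_Ioi_log {b x : ℝ} (hb : 0 < b) (hx : 0 < x) :
    ∫⁻ z in Ioi (log x), ENNReal.ofReal (exp (-b * z)) = ENNReal.ofReal (x ^ (-b) / b) := by
  have hb' : -b < 0 := neg_neg_of_pos hb
  rw [← ofReal_integral_eq_lintegral_ofReal (integrableOn_exp_mul_Ioi hb' _)
    (ae_of_all _ fun _ => (exp_pos _).le), integral_exp_mul_Ioi hb', neg_div_neg_eq,
    rpow_def_of_pos hx, mul_comm]

lemma lintegral_neg_rpow_Ioo {c ε : ℝ} (hc : -1 < c) (hε : 0 < ε) :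
    ∫⁻ y in Ioo (-ε) 0, ENNReal.ofReal ((-y) ^ c) = ENNReal.ofReal (ε ^ (c + 1) / (c + 1)) := by
  have hint : IntervalIntegrable (fun y : ℝ => (-y) ^ c) volume (-ε) 0 := by
    simpa using (IntervalIntegrable.iff_comp_neg (f := fun x : ℝ => x ^ c)).mp
      (intervalIntegral.intervalIntegrable_rpow' hc (a := 0) (b := ε)) |>.symm
  rw [setLIntegral_congr Ioo_ae_eq_Ioc, ← ofReal_integral_eq_lintegral_ofReal
    ((intervalIntegrable_iff_integrableOn_Ioc_of_le (by linarith)).mp hint)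
    ((ae_restrict_iff' measurableSet_Ioc).mpr (ae_of_all _ fun y hy => rpow_nonneg (by linarith [hy.2]) _)),
    ← intervalIntegral.integral_of_le (by linarith), intervalIntegral.integral_comp_neg
    (fun x : ℝ => x ^ c), neg_zero, neg_neg, integral_rpow (Or.inl hc), zero_rpow (by linarith), sub_zero]

lemma exp_neg_one_mul_neg_le_one_sub_exp {y : ℝ} (hy₁ : -1 ≤ y) (hy₀ : y ≤ 0) :
    exp (-1) * -y ≤ 1 - exp y := by
  have h : exp y * -y ≤ 1 - exp y := by
    have h1 : exp y * exp (-y) = 1 := by rw [← exp_add, add_neg_cancel, exp_zero]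
    nlinarith [mul_le_mul_of_nonneg_left (add_one_le_exp (-y)) (exp_pos y).le]
  nlinarith [exp_le_exp.mpr hy₁]

lemma one_sub_exp_rpow_neg_le {y β : ℝ} (hy₁ : -1 ≤ y) (hy₀ : y < 0) (hβ : 0 ≤ β) :
    (1 - exp y) ^ (-β) ≤ exp β * (-y) ^ (-β) := by
  calc (1 - exp y) ^ (-β) ≤ (exp (-1) * -y) ^ (-β) :=
        rpow_le_rpow_of_nonpos (by have := exp_pos (-1); nlinarith)
          (exp_neg_one_mul_neg_le_one_sub_exp hy₁ hy₀.le) (neg_nonpos.mpr hβ)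
    _ = exp β * (-y) ^ (-β) := by
        rw [mul_rpow (exp_pos _).le (by linarith), ← exp_mul]; ring_nf

lemma lintegral_corner_inner_le {α β Y : ℝ} (hα : 0 < α) (hαβ : α ≤ β) (hβ : β ≤ 1)
    (hY₁ : -1 ≤ Y) (hY₀ : Y < 0) :
    ∫⁻ Z in Ioi (log (1 - exp Y)),
        ENNReal.ofReal (exp ((1 - β) * Y) * exp (-α * Z) + exp ((1 - α) * Y) * exp (-β * Z))
      ≤ ENNReal.ofReal (exp β * (1 / α + 1 / β) * (-Y) ^ (-β)) := by
  set x := 1 - exp Y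
  have hx₀ : 0 < x := sub_pos.mpr (exp_lt_one_iff.mpr hY₀)
  have hx₁ : x ≤ 1 := by linarith [exp_pos Y]
  have hβ₀ : 0 < β := hα.trans_le hαβ
  calc _ ≤ ∫⁻ Z in Ioi (log x), ENNReal.ofReal (exp (-α * Z)) + ENNReal.ofReal (exp (-β * Z)) := by
        refine lintegral_mono fun Z => ?_
        rw [← ENNReal.ofReal_add (exp_pos _).le (exp_pos _).le]
        have h₁ : exp ((1 - β) * Y) ≤ 1 := exp_le_one_iff.mpr (by nlinarith)
        have h₂ : exp ((1 - α) * Y) ≤ 1 := exp_le_one_iff.mpr (by nlinarith)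
        gcongr
        · exact mul_le_of_le_one_left (exp_pos _).le h₁
        · exact mul_le_of_le_one_left (exp_pos _).le h₂
    _ = ENNReal.ofReal (x ^ (-α) / α) + ENNReal.ofReal (x ^ (-β) / β) := by
        rw [lintegral_add_left (by fun_prop), lintegral_exp_neg_mul_Ioi_log hα hx₀,
          lintegral_exp_neg_mul_Ioi_log hβ₀ hx₀]
    _ ≤ _ := by
        rw [← ENNReal.ofReal_add (by positivity) (by positivity)]
        refine ENNReal.ofReal_le_ofReal ?_
        have hxβ : x ^ (-β) ≤ exp β * (-Y) ^ (-β) := one_sub_exp_rpow_neg_le hY₁ hY₀ hβ₀.le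
        have hxα : x ^ (-α) ≤ x ^ (-β) := rpow_le_rpow_of_exponent_ge hx₀ hx₁ (by linarith)
        calc x ^ (-α) / α + x ^ (-β) / β
            ≤ exp β * (-Y) ^ (-β) / α + exp β * (-Y) ^ (-β) / β := by
              gcongr
              exact hxα.trans hxβ
          _ = _ := by ring

/-- The corner integral with `2λ` replaced by `α + β`. -/
noncomputable def cornerIntegral (α β ε : ℝ) : ℝ≥0∞ :=
  ∫⁻ Y in Ioo (-ε) 0, ∫⁻ Z in Ioi (log (1 - exp Y)),
    ENNReal.ofReal (exp ((1 - β) * Y) * exp (-α * Z) + exp ((1 - α) * Y) * exp (-β * Z))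

lemma exists_cornerIntegral_le_rpow {α β : ℝ} (hα : 0 < α) (hαβ : α ≤ β) (hβ : β < 1) :
    ∃ C > 0, ∀ ε ∈ Ioc (0 : ℝ) 1, cornerIntegral α β ε ≤ ENNReal.ofReal (C * ε ^ (1 - β)) := by
  have hβ₀ : 0 < β := hα.trans_le hαβ
  set K := exp β * (1 / α + 1 / β)
  have hK : 0 < K := by positivity
  refine ⟨K / (1 - β), div_pos hK (by linarith), fun ε ⟨hε₀, hε₁⟩ => ?_⟩
  calc cornerIntegral α β ε ≤ ∫⁻ Y in Ioo (-ε) 0, ENNReal.ofReal (K * (-Y) ^ (-β)) :=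
        setLIntegral_mono' measurableSet_Ioo fun Y hY =>
          lintegral_corner_inner_le hα hαβ hβ.le (by linarith [hY.1]) hY.2
    _ = ENNReal.ofReal K * ENNReal.ofReal (ε ^ (-β + 1) / (-β + 1)) := by
        simp_rw [ENNReal.ofReal_mul hK.le]
        rw [lintegral_const_mul _ (by fun_prop), lintegral_neg_rpow_Ioo (by linarith) hε₀]
    _ = ENNReal.ofReal (K / (1 - β) * ε ^ (1 - β)) := by
        rw [← ENNReal.ofReal_mul hK.le, neg_add_eq_sub]
        ring_nf

lemma tendsto_nhdsGT_zero_of_le_ofReal_mul_rpow {f : ℝ → ℝ≥0∞} {C p : ℝ} (hp : 0 < p)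
    (hf : ∀ ε ∈ Ioc (0 : ℝ) 1, f ε ≤ ENNReal.ofReal (C * ε ^ p)) :
    Tendsto f (𝓝[>] 0) (𝓝 0) := by
  have hbound : Tendsto (fun ε : ℝ => ENNReal.ofReal (C * ε ^ p)) (𝓝[>] 0) (𝓝 0) := by
    have h := ((continuousAt_rpow_const 0 p (Or.inr hp.le)).const_mul C).tendsto
    rw [zero_rpow hp.ne', mul_zero] at h
    simpa using (ENNReal.tendsto_ofReal h).mono_left nhdsWithin_le_nhds
  refine tendsto_of_tendsto_of_tendsto_of_le_of_le' tendsto_const_nhds hbound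
    (Eventually.of_forall fun _ => zero_le) ?_
  filter_upwards [Ioc_mem_nhdsGT zero_lt_one] with ε hε using hf ε hε

theorem corner_integral_small_general
    (lam α β : ℝ)
    (hα : 0 < α) (hαβ : α ≤ β) (hβ : β < 1/2) (hsum : α + β = 2*lam) :
    ∃ C > (0:ℝ),
      (∀ ε ∈ Set.Ioc (0:ℝ) 1,
        (∫⁻ Y in Set.Ioo (-ε) (0:ℝ),
            ∫⁻ Z in Set.Ioi (Real.log (1 - Real.exp Y)),
              ENNReal.ofReal
                (Real.exp ((1-2*lam+α)*Y) * Real.exp ((β-2*lam)*Z)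
                  + Real.exp ((1-2*lam+β)*Y) * Real.exp ((α-2*lam)*Z)))
          ≤ ENNReal.ofReal (C * ε ^ (1-2*lam+α)))
      ∧ Filter.Tendsto
          (fun ε : ℝ =>
            ∫⁻ Y in Set.Ioo (-ε) (0:ℝ),
              ∫⁻ Z in Set.Ioi (Real.log (1 - Real.exp Y)),
                ENNReal.ofReal
                  (Real.exp ((1-2*lam+α)*Y) * Real.exp ((β-2*lam)*Z)
                    + Real.exp ((1-2*lam+β)*Y) * Real.exp ((α-2*lam)*Z)))
          (nhdsWithin (0:ℝ) (Set.Ioi 0)) (nhds 0) := by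
  have hβ₁ : β < 1 := by linarith
  rw [show 1 - 2*lam + α = 1 - β by linarith, show 1 - 2*lam + β = 1 - α by linarith,
    show β - 2*lam = -α by linarith, show α - 2*lam = -β by linarith]
  obtain ⟨C, hC, hle⟩ := exists_cornerIntegral_le_rpow hα hαβ hβ₁
  exact ⟨C, hC, hle, tendsto_nhdsGT_zero_of_le_ofReal_mul_rpow (by linarith) hle⟩

/-- smallness of the corner integral. -/
theorem corner_integral_small
    (lam α β : ℝ) (hlam : lam ∈ Set.Ioo (0:ℝ) (1/2))
    (hα : 0 < α) (hαβ : α ≤ β) (hβ : β < 1/2) (hsum : α + β = 2*lam) :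
    ∃ C > (0:ℝ),
      (∀ ε ∈ Set.Ioc (0:ℝ) 1,
        (∫⁻ Y in Set.Ioo (-ε) (0:ℝ),
            ∫⁻ Z in Set.Ioi (Real.log (1 - Real.exp Y)),
              ENNReal.ofReal
                (Real.exp ((1-2*lam+α)*Y) * Real.exp ((β-2*lam)*Z)
                  + Real.exp ((1-2*lam+β)*Y) * Real.exp ((α-2*lam)*Z)))
          ≤ ENNReal.ofReal (C * ε ^ (1-2*lam+α)))
      ∧ Filter.Tendsto
          (fun ε : ℝ =>
            ∫⁻ Y in Set.Ioo (-ε) (0:ℝ),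
              ∫⁻ Z in Set.Ioi (Real.log (1 - Real.exp Y)),
                ENNReal.ofReal
                  (Real.exp ((1-2*lam+α)*Y) * Real.exp ((β-2*lam)*Z)
                    + Real.exp ((1-2*lam+β)*Y) * Real.exp ((α-2*lam)*Z)))
          (nhdsWithin (0:ℝ) (Set.Ioi 0)) (nhds 0) :=
  corner_integral_small_general lam α β hα hαβ hβ hsum
end
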